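/- arXiv:math/0306321 — 9 statements merged into one kernel-verified Lean document; each statement's English description precedes it below -/
import Mathlib

section
/- Let n ≥ 1, let F be an upper triangular invertible n×n complex matrix, and let Σ be a symmetric n×n complex matrix. Then the following are equivalent: (i) there exist upper triangular invertible n×n complex matrices X and Y and symmetric n×n complex matrices A and B such that fromBlocks ((F⁻¹)ᵀ) 0 (F*Σ) F = (fromBlocks X (X*A) 0 ((Xᵀ)⁻¹)) * (fromBlocks 0 1 (-1) 0) * (fromBlocks Y (Y*B) 0 ((Yᵀ)⁻¹)); (ii) there exist a lower triangular invertible n×n complex matrix L and an upper triangular invertible n×n complex matrix U such that F*Σ = L*U (i.e., F·Σ lies in the big cell of GL_n(ℂ)). -/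
open Matrix

private lemma upper_inv' {n : ℕ} {X : Matrix (Fin n) (Fin n) ℂ}
    (h : ∀ i j : Fin n, j < i → X i j = 0) (hX : IsUnit X) :
    ∀ i j : Fin n, j < i → X⁻¹ i j = 0 := by
  haveI := hX.invertible
  have hbt : BlockTriangular X (id : Fin n → Fin n) := fun i j hij => h i j hij
  exact fun i j hij => blockTriangular_inv_of_blockTriangular hbt hij

private lemma lower_inv' {n : ℕ} {X : Matrix (Fin n) (Fin n) ℂ}
    (h : ∀ i j : Fin n, i < j → X i j = 0) (hX : IsUnit X) :
    ∀ i j : Fin n, i < j → X⁻¹ i j = 0 := by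
  haveI := hX.invertible
  have hbt : BlockTriangular X (OrderDual.toDual : Fin n → (Fin n)ᵒᵈ) :=
    fun i j hij => h i j hij
  exact fun i j hij => blockTriangular_inv_of_blockTriangular hbt hij

private lemma matInvNeg {n : ℕ} (M : Matrix (Fin n) (Fin n) ℂ) (hM : IsUnit M) :
    (-M)⁻¹ = -(M⁻¹) := by
  apply Matrix.inv_eq_right_inv
  rw [Matrix.neg_mul, Matrix.mul_neg, neg_neg,
    Matrix.mul_nonsing_inv _ ((Matrix.isUnit_iff_isUnit_det M).mp hM)]

/-- Remark "bigcell" of the paper, symplectic case: a lower-triangular symplectic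
element `fromBlocks (F⁻¹)ᵀ 0 (F·Σ) F` lies in the Bruhat cell `B·ẇ₀·B` of
`Sp(2n,ℂ)` if and only if `F·Σ` lies in the big cell of `GL_n(ℂ)`, i.e. admits an
`LU` decomposition with invertible triangular factors. -/
theorem bigcell_symplectic (n : ℕ) (hn : 1 ≤ n)
    (F S : Matrix (Fin n) (Fin n) ℂ)
    (hF_upper : ∀ i j : Fin n, j < i → F i j = 0) (hF_unit : IsUnit F)
    (hS_symm : Sᵀ = S) :
    (∃ X Y A B : Matrix (Fin n) (Fin n) ℂ,
        (∀ i j : Fin n, j < i → X i j = 0) ∧ IsUnit X ∧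
        (∀ i j : Fin n, j < i → Y i j = 0) ∧ IsUnit Y ∧
        Aᵀ = A ∧ Bᵀ = B ∧
        fromBlocks (F⁻¹)ᵀ 0 (F * S) F =
          fromBlocks X (X * A) 0 (Xᵀ)⁻¹ *
            fromBlocks 0 1 (-1) 0 *
            fromBlocks Y (Y * B) 0 (Yᵀ)⁻¹) ↔
    (∃ L U : Matrix (Fin n) (Fin n) ℂ,
        (∀ i j : Fin n, i < j → L i j = 0) ∧ IsUnit L ∧
        (∀ i j : Fin n, j < i → U i j = 0) ∧ IsUnit U ∧
        F * S = L * U) := by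
  have hFdet : IsUnit F.det := (Matrix.isUnit_iff_isUnit_det F).mp hF_unit
  constructor
  · rintro ⟨X, Y, A, B, hX, hXu, hY, hYu, hA, hB, heq⟩
    rw [Matrix.fromBlocks_multiply, Matrix.fromBlocks_multiply] at heq
    have h21 := (Matrix.fromBlocks_inj.mp heq).2.2.1
    have hXtu : IsUnit (Xᵀ) := by
      rw [Matrix.isUnit_iff_isUnit_det, Matrix.det_transpose,
        ← Matrix.isUnit_iff_isUnit_det]; exact hXu
    refine ⟨-(Xᵀ)⁻¹, Y, ?_, ?_, hY, hYu, ?_⟩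
    · intro i j hij
      have hXt : ∀ i j : Fin n, i < j → Xᵀ i j = 0 := fun i j h' => hX j i h'
      simp [lower_inv' hXt hXtu i j hij]
    · exact (IsUnit.neg_iff _).mpr (Matrix.isUnit_nonsing_inv_iff.mpr hXtu)
    · rw [h21]
      simp [Matrix.mul_assoc, Matrix.neg_mul, Matrix.mul_neg]
  · rintro ⟨L, U, hL, hLu, hU, hUu, hLU⟩
    have hLdet : IsUnit L.det := (Matrix.isUnit_iff_isUnit_det L).mp hLu
    have hUdet : IsUnit U.det := (Matrix.isUnit_iff_isUnit_det U).mp hUu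
    have hLtu : IsUnit (Lᵀ) := by
      rw [Matrix.isUnit_iff_isUnit_det, Matrix.det_transpose]; exact hLdet
    have hUtu : IsUnit (Uᵀ) := by
      rw [Matrix.isUnit_iff_isUnit_det, Matrix.det_transpose]; exact hUdet
    have hSu : IsUnit S := by
      have h1 : IsUnit ((F * S).det) := by
        rw [hLU, Matrix.det_mul]; exact hLdet.mul hUdet
      rw [Matrix.det_mul] at h1
      rw [Matrix.isUnit_iff_isUnit_det]
      exact isUnit_of_mul_isUnit_right h1
    have hSdet : IsUnit S.det := (Matrix.isUnit_iff_isUnit_det S).mp hSu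
    haveI := hUu.invertible
    haveI := hLu.invertible
    haveI := hSu.invertible
    have hS : S = F⁻¹ * (L * U) := by
      rw [← hLU, ← Matrix.mul_assoc, Matrix.nonsing_inv_mul _ hFdet, Matrix.one_mul]
    set X : Matrix (Fin n) (Fin n) ℂ := -(Lᵀ)⁻¹ with hXdef
    set A : Matrix (Fin n) (Fin n) ℂ := Lᵀ * (Fᵀ)⁻¹ * U⁻¹ with hAdef
    have hXt : Xᵀ = -L⁻¹ := by
      rw [hXdef, Matrix.transpose_neg, Matrix.transpose_nonsing_inv,
        Matrix.transpose_transpose]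
    have hXti : (Xᵀ)⁻¹ = -L := by
      rw [hXt, matInvNeg _ (Matrix.isUnit_nonsing_inv_iff.mpr hLu),
        Matrix.nonsing_inv_nonsing_inv _ hLdet]
    have hXA : X * A = -((Fᵀ)⁻¹ * U⁻¹) := by
      rw [hXdef, hAdef, Matrix.neg_mul, ← Matrix.mul_assoc, ← Matrix.mul_assoc,
        Matrix.nonsing_inv_mul _ ((Matrix.isUnit_iff_isUnit_det _).mp hLtu),
        Matrix.one_mul]
    -- symmetry of A
    have hsym : Uᵀ * Lᵀ * (Fᵀ)⁻¹ = F⁻¹ * (L * U) := by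
      have h2 : (F⁻¹ * (L * U))ᵀ = F⁻¹ * (L * U) := by rw [← hS]; exact hS_symm
      rw [Matrix.transpose_mul, Matrix.transpose_mul, Matrix.transpose_nonsing_inv] at h2
      rw [← h2, Matrix.mul_assoc]
    have hLtF : Lᵀ * (Fᵀ)⁻¹ = (Uᵀ)⁻¹ * (F⁻¹ * (L * U)) := by
      rw [← hsym, ← Matrix.mul_assoc, ← Matrix.mul_assoc,
        Matrix.nonsing_inv_mul _ ((Matrix.isUnit_iff_isUnit_det _).mp hUtu),
        Matrix.one_mul]
    have hA2 : A = (Uᵀ)⁻¹ * (F⁻¹ * L) := by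
      rw [hAdef, hLtF, Matrix.mul_assoc (Uᵀ)⁻¹, Matrix.mul_assoc F⁻¹,
        Matrix.mul_assoc L, Matrix.mul_nonsing_inv _ hUdet, Matrix.mul_one]
    have hSymmA : Aᵀ = A := by
      have hAT : Aᵀ = (Uᵀ)⁻¹ * (F⁻¹ * L) := by
        rw [hAdef]
        simp [Matrix.transpose_mul, Matrix.transpose_nonsing_inv,
          Matrix.transpose_transpose, Matrix.mul_assoc]
      rw [hAT, hA2]
    have hkey : (Fᵀ)⁻¹ * S⁻¹ = (Lᵀ)⁻¹ * (Uᵀ)⁻¹ := by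
      rw [← Matrix.mul_inv_rev, ← Matrix.mul_inv_rev, ← Matrix.transpose_mul, ← hLU,
        Matrix.transpose_mul, hS_symm]
    refine ⟨X, U, A, S⁻¹, ?_, ?_, hU, hUu, hSymmA, ?_, ?_⟩
    · intro i j hij
      have hLt : ∀ i j : Fin n, j < i → Lᵀ i j = 0 := fun i j h' => hL j i h'
      simp [hXdef, upper_inv' hLt hLtu i j hij]
    · exact (IsUnit.neg_iff _).mpr (Matrix.isUnit_nonsing_inv_iff.mpr hLtu)
    · rw [Matrix.transpose_nonsing_inv, hS_symm]
    · have hcomp : fromBlocks X (X * A) 0 (Xᵀ)⁻¹ * fromBlocks 0 1 (-1) 0 *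
          fromBlocks U (U * S⁻¹) 0 (Uᵀ)⁻¹ =
          fromBlocks (-(X * A * U)) (-(X * A * (U * S⁻¹)) + X * (Uᵀ)⁻¹)
            (-((Xᵀ)⁻¹ * U)) (-((Xᵀ)⁻¹ * (U * S⁻¹))) := by
        rw [Matrix.fromBlocks_multiply, Matrix.fromBlocks_multiply, Matrix.fromBlocks_inj]
        refine ⟨by noncomm_ring, by noncomm_ring, by noncomm_ring, by noncomm_ring⟩
      rw [hcomp, Matrix.fromBlocks_inj]
      refine ⟨?_, ?_, ?_, ?_⟩
      · rw [Matrix.transpose_nonsing_inv, hXA, Matrix.neg_mul, neg_neg,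
          Matrix.mul_assoc, Matrix.nonsing_inv_mul _ hUdet, Matrix.mul_one]
      · rw [hXA, hXdef, Matrix.neg_mul, Matrix.neg_mul, neg_neg,
          Matrix.mul_assoc (Fᵀ)⁻¹, ← Matrix.mul_assoc U⁻¹,
          Matrix.nonsing_inv_mul _ hUdet, Matrix.one_mul, ← hkey]
        abel
      · rw [hXti, hLU, Matrix.neg_mul, neg_neg]
      · rw [hXti, Matrix.neg_mul, neg_neg, ← Matrix.mul_assoc, ← hLU,
          Matrix.mul_assoc, Matrix.mul_nonsing_inv _ hSdet, Matrix.mul_one]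
end

section
/- Let n ≥ 1, let F be an upper triangular invertible n×n complex matrix, let ψ ∈ ℂⁿ be a column vector, and let Σ be an n×n complex matrix with Σ + Σᵀ = −ψ·ψᵀ. Form the (1+n+n)×(1+n+n) block matrix x = [[1, ψᵀ, 0], [0, (F⁻¹)ᵀ, 0], [−F·ψ, F·Σ, F]]. Then the following are equivalent: (i) there exist upper triangular invertible n×n matrices X and U, vectors γ, c ∈ ℂⁿ, and n×n matrices A and S with A + Aᵀ = −γ·γᵀ and S + Sᵀ = −c·cᵀ, such that x = [[1, 0, γᵀ], [−X·γ, X, X·A], [0, 0, (Xᵀ)⁻¹]] * [[(−1)ⁿ, 0, 0], [0, 0, Iₙ], [0, Iₙ, 0]] * [[1, 0, cᵀ], [−U·c, U, U·S], [0, 0, (Uᵀ)⁻¹]]; (ii) there exist a lower triangular invertible matrix L and an upper triangular invertible matrix U′ with F·Σ = L·U′, and moreover Σ is invertible with ψᵀ·Σ⁻¹·ψ = (−1)ⁿ − 1 (as a scalar). -/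
/-!
Multiply out `B(X, γ, A) · ẇ₀ · B(U, c, S')`, where `B(X, γ, A)` is the first factor in (i).
Its blocks in positions (3,2), (3,1), (1,2) and (1,1) are `X⁻ᵀU`, `-X⁻ᵀUc`, `γᵀU` and
`(-1)ⁿ - γᵀUc`; equating them with those of `x` gives the LU factorisation `FΣ = X⁻ᵀ · U`,
`c = Σ⁻¹ψ` and `ψᵀΣ⁻¹ψ = (-1)ⁿ - 1`. Conversely, from `FΣ = LU` take `X = L⁻ᵀ`, `γ = U⁻ᵀψ`,
`c = Σ⁻¹ψ`, `A = U⁻ᵀΣᵀU⁻¹` and `S' = Σ⁻¹`. The remaining blocks then match because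
`Σᵀ = -Σ - ψψᵀ` gives `Σᵀc = -(1 + ψᵀc)ψ` and `ψᵀΣ⁻¹ = -(1 + ψᵀc)cᵀ`, where
`1 + ψᵀc = (-1)ⁿ`. Both `A` and `S'` are of the form `PᵀΣᵀP` (with `P = U⁻¹`, resp. `P = Σ⁻ᵀ`),
and `Σ ↦ PᵀΣP` turns `Σ + Σᵀ = -ψψᵀ` into the same condition with `ψ` replaced by `Pᵀψ`.
-/

open Matrix

/-- A row vector as a `1 × n` matrix. -/
def rowV {n : ℕ} (v : Fin n → ℂ) : Matrix (Fin 1) (Fin n) ℂ :=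
  Matrix.of fun _ j => v j

/-- A column vector as an `n × 1` matrix. -/
def colV {n : ℕ} (v : Fin n → ℂ) : Matrix (Fin n) (Fin 1) ℂ :=
  Matrix.of fun i _ => v i

/-- A `(1+n+n) × (1+n+n)` matrix built from a `3 × 3` array of blocks. -/
def blk3 {n : ℕ} (a : Matrix (Fin 1) (Fin 1) ℂ) (b c : Matrix (Fin 1) (Fin n) ℂ)
    (d : Matrix (Fin n) (Fin 1) ℂ) (e f : Matrix (Fin n) (Fin n) ℂ)
    (g : Matrix (Fin n) (Fin 1) ℂ) (h k : Matrix (Fin n) (Fin n) ℂ) :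
    Matrix (Fin 1 ⊕ (Fin n ⊕ Fin n)) (Fin 1 ⊕ (Fin n ⊕ Fin n)) ℂ :=
  fromBlocks a (fromCols b c) (fromRows d g) (fromBlocks e f h k)

namespace Matrix

theorem fromCols_add_fromCols {R m n₁ n₂ : Type*} [Add R] (a b : Matrix m n₁ R)
    (c d : Matrix m n₂ R) : fromCols a c + fromCols b d = fromCols (a + b) (c + d) := by
  ext i (j | j) <;> rfl

theorem fromRows_add_fromRows {R m₁ m₂ n : Type*} [Add R] (a b : Matrix m₁ n R)
    (c d : Matrix m₂ n R) : fromRows a c + fromRows b d = fromRows (a + b) (c + d) := by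
  ext (i | i) j <;> rfl

variable {m l R : Type*} [CommRing R]

theorem transpose_add_transpose_transpose {S : Matrix m m R} {ψ : m → R}
    (hS : S + Sᵀ = -vecMulVec ψ ψ) : Sᵀ + Sᵀᵀ = -vecMulVec ψ ψ := by
  rwa [transpose_transpose, add_comm]

variable [Fintype m]

theorem BlockTriangular.transpose_inv [DecidableEq m] {α : Type*} [LinearOrder α]
    {M : Matrix m m R} {b : m → α} (hb : M.BlockTriangular b) (hM : IsUnit M) :
    (Mᵀ)⁻¹.BlockTriangular (OrderDual.toDual ∘ b) := by
  have := hM.invertible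
  rw [← transpose_nonsing_inv]
  exact (blockTriangular_inv_of_blockTriangular hb).transpose

variable {S : Matrix m m R} {ψ : m → R}

theorem transpose_mul_mul_add_transpose (P : Matrix m l R) (hS : S + Sᵀ = -vecMulVec ψ ψ) :
    Pᵀ * S * P + (Pᵀ * S * P)ᵀ = -vecMulVec (ψ ᵥ* P) (ψ ᵥ* P) := by
  rw [transpose_mul, transpose_mul, transpose_transpose, Matrix.mul_assoc, ← Matrix.mul_add,
    ← Matrix.add_mul, hS, Matrix.neg_mul, Matrix.mul_neg, vecMulVec_mul, mul_vecMulVec,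
    mulVec_transpose]

variable [DecidableEq m]

theorem nonsing_inv_add_transpose (hS : S + Sᵀ = -vecMulVec ψ ψ) (hdet : IsUnit S.det) :
    S⁻¹ + S⁻¹ᵀ = -vecMulVec (S⁻¹ *ᵥ ψ) (S⁻¹ *ᵥ ψ) := by
  have := transpose_mul_mul_add_transpose S⁻¹ᵀ (transpose_add_transpose_transpose hS)
  rwa [transpose_transpose, Matrix.mul_assoc, ← transpose_mul, nonsing_inv_mul _ hdet,
    transpose_one, Matrix.mul_one, vecMul_transpose] at this

theorem transpose_mul_nonsing_inv (hS : S + Sᵀ = -vecMulVec ψ ψ) (hdet : IsUnit S.det) :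
    Sᵀ * S⁻¹ = -vecMulVec ψ (ψ ᵥ* S⁻¹) - 1 := by
  rw [eq_sub_of_add_eq' hS, sub_mul, Matrix.neg_mul, mul_nonsing_inv _ hdet, vecMulVec_mul]

theorem transpose_mulVec_nonsing_inv_mulVec (hS : S + Sᵀ = -vecMulVec ψ ψ)
    (hdet : IsUnit S.det) : Sᵀ *ᵥ (S⁻¹ *ᵥ ψ) = -((1 + ψ ⬝ᵥ S⁻¹ *ᵥ ψ) • ψ) := by
  rw [mulVec_mulVec, transpose_mul_nonsing_inv hS hdet, sub_mulVec, neg_mulVec, one_mulVec,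
    vecMulVec_mulVec, ← dotProduct_mulVec]
  simp only [op_smul_eq_smul, add_smul, one_smul, neg_add_rev]
  abel

theorem vecMul_nonsing_inv (hS : S + Sᵀ = -vecMulVec ψ ψ) (hdet : IsUnit S.det) :
    ψ ᵥ* S⁻¹ = -((1 + ψ ⬝ᵥ S⁻¹ *ᵥ ψ) • (S⁻¹ *ᵥ ψ)) := by
  have := transpose_mulVec_nonsing_inv_mulVec (transpose_add_transpose_transpose hS)
    (isUnit_det_transpose _ hdet)
  rw [transpose_transpose, ← transpose_nonsing_inv, dotProduct_transpose_mulVec,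
    mulVec_transpose] at this
  calc ψ ᵥ* S⁻¹ = S⁻¹ *ᵥ (S *ᵥ (ψ ᵥ* S⁻¹)) := by
        rw [mulVec_mulVec, nonsing_inv_mul _ hdet, one_mulVec]
    _ = _ := by rw [this, mulVec_neg, mulVec_smul]

end Matrix

section Blocks

variable {n : ℕ}

theorem rowV_inj {u v : Fin n → ℂ} : rowV u = rowV v ↔ u = v := replicateRow_inj

theorem colV_inj {u v : Fin n → ℂ} : colV u = colV v ↔ u = v := replicateCol_inj

theorem rowV_add (u v : Fin n → ℂ) : rowV (u + v) = rowV u + rowV v := rfl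

theorem rowV_smul (a : ℂ) (v : Fin n → ℂ) : rowV (a • v) = a • rowV v := rfl

theorem colV_add (u v : Fin n → ℂ) : colV (u + v) = colV u + colV v := rfl

theorem colV_smul (a : ℂ) (v : Fin n → ℂ) : colV (a • v) = a • colV v := rfl

theorem colV_neg (v : Fin n → ℂ) : colV (-v) = -colV v := rfl

theorem rowV_zero : rowV (0 : Fin n → ℂ) = 0 := rfl

theorem colV_zero : colV (0 : Fin n → ℂ) = 0 := rfl

theorem rowV_mul (v : Fin n → ℂ) (M : Matrix (Fin n) (Fin n) ℂ) :
    rowV v * M = rowV (v ᵥ* M) :=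
  (replicateRow_vecMul M v).symm

theorem mul_colV (M : Matrix (Fin n) (Fin n) ℂ) (v : Fin n → ℂ) :
    M * colV v = colV (M *ᵥ v) :=
  (replicateCol_mulVec M v).symm

theorem rowV_mul_colV (u v : Fin n → ℂ) : rowV u * colV v = (u ⬝ᵥ v) • 1 := by
  ext i j
  simp [rowV, colV, mul_apply, dotProduct, Subsingleton.elim i j]

theorem colV_mul_rowV (u v : Fin n → ℂ) : colV u * rowV v = vecMulVec u v :=
  (vecMulVec_eq (Fin 1) u v).symm

theorem blk3_mul (a : Matrix (Fin 1) (Fin 1) ℂ) (b c : Matrix (Fin 1) (Fin n) ℂ)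
    (d : Matrix (Fin n) (Fin 1) ℂ) (e f : Matrix (Fin n) (Fin n) ℂ)
    (g : Matrix (Fin n) (Fin 1) ℂ) (h k : Matrix (Fin n) (Fin n) ℂ)
    (a' : Matrix (Fin 1) (Fin 1) ℂ) (b' c' : Matrix (Fin 1) (Fin n) ℂ)
    (d' : Matrix (Fin n) (Fin 1) ℂ) (e' f' : Matrix (Fin n) (Fin n) ℂ)
    (g' : Matrix (Fin n) (Fin 1) ℂ) (h' k' : Matrix (Fin n) (Fin n) ℂ) :
    blk3 a b c d e f g h k * blk3 a' b' c' d' e' f' g' h' k' =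
      blk3 (a * a' + (b * d' + c * g')) (a * b' + (b * e' + c * h')) (a * c' + (b * f' + c * k'))
        (d * a' + (e * d' + f * g')) (d * b' + (e * e' + f * h')) (d * c' + (e * f' + f * k'))
        (g * a' + (h * d' + k * g')) (g * b' + (h * e' + k * h')) (g * c' + (h * f' + k * k')) := by
  simp only [blk3, fromBlocks_multiply, fromCols_mul_fromRows, fromCols_mul_fromBlocks,
    mul_fromCols, fromBlocks_mul_fromRows, fromRows_mul, fromCols_add_fromCols,
    fromRows_add_fromRows, fromCols_fromRows_eq_fromBlocks, fromBlocks_add]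

theorem blk3_inj {a a' : Matrix (Fin 1) (Fin 1) ℂ} {b c b' c' : Matrix (Fin 1) (Fin n) ℂ}
    {d d' : Matrix (Fin n) (Fin 1) ℂ} {e f e' f' : Matrix (Fin n) (Fin n) ℂ}
    {g g' : Matrix (Fin n) (Fin 1) ℂ} {h k h' k' : Matrix (Fin n) (Fin n) ℂ} :
    blk3 a b c d e f g h k = blk3 a' b' c' d' e' f' g' h' k' ↔
      a = a' ∧ b = b' ∧ c = c' ∧ d = d' ∧ e = e' ∧ f = f' ∧ g = g' ∧ h = h' ∧ k = k' := by
  simp only [blk3, fromBlocks_inj, fromCols_ext_iff, fromRows_ext_iff]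
  tauto

noncomputable def borelElem (X : Matrix (Fin n) (Fin n) ℂ) (γ : Fin n → ℂ)
    (A : Matrix (Fin n) (Fin n) ℂ) : Matrix (Fin 1 ⊕ (Fin n ⊕ Fin n)) (Fin 1 ⊕ (Fin n ⊕ Fin n)) ℂ :=
  blk3 1 0 (rowV γ) (colV (-(X *ᵥ γ))) X (X * A) 0 0 (Xᵀ)⁻¹

variable (n) in
def weylLongest : Matrix (Fin 1 ⊕ (Fin n ⊕ Fin n)) (Fin 1 ⊕ (Fin n ⊕ Fin n)) ℂ :=
  blk3 (((-1 : ℂ) ^ n) • 1) 0 0 0 0 1 0 1 0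

noncomputable def oppBorelElem (F : Matrix (Fin n) (Fin n) ℂ) (ψ : Fin n → ℂ)
    (S : Matrix (Fin n) (Fin n) ℂ) : Matrix (Fin 1 ⊕ (Fin n ⊕ Fin n)) (Fin 1 ⊕ (Fin n ⊕ Fin n)) ℂ :=
  blk3 1 (rowV ψ) 0 0 (F⁻¹)ᵀ 0 (colV (-(F *ᵥ ψ))) (F * S) F

theorem borelElem_mul_weylLongest_mul_borelElem (X U A S' : Matrix (Fin n) (Fin n) ℂ)
    (γ c : Fin n → ℂ) :
    borelElem X γ A * weylLongest n * borelElem U c S' =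
      blk3 (((-1 : ℂ) ^ n - γ ⬝ᵥ U *ᵥ c) • 1) (rowV (γ ᵥ* U))
        (rowV ((-1 : ℂ) ^ n • c + γ ᵥ* (U * S')))
        (colV (-(X *ᵥ ((-1 : ℂ) ^ n • γ + (A * U) *ᵥ c)))) (X * A * U)
        (X * (A * (U * S') + (Uᵀ)⁻¹ - (-1 : ℂ) ^ n • vecMulVec γ c))
        (colV (-(((Xᵀ)⁻¹ * U) *ᵥ c))) ((Xᵀ)⁻¹ * U) ((Xᵀ)⁻¹ * U * S') := by
  simp only [borelElem, weylLongest, blk3_mul, Matrix.mul_zero, Matrix.zero_mul, add_zero,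
    zero_add, Matrix.mul_one, Matrix.one_mul]
  congr 1 <;>
    simp only [Matrix.smul_mul, Matrix.mul_smul, Matrix.one_mul, Matrix.mul_one, rowV_mul,
      mul_colV, rowV_mul_colV, colV_mul_rowV, mul_vecMulVec, rowV_add, rowV_smul, colV_add,
      colV_smul, colV_neg, mulVec_add, mulVec_smul, mulVec_mulVec, Matrix.mul_assoc,
      Matrix.mul_add, Matrix.mul_sub, Matrix.neg_mul, Matrix.mul_neg, dotProduct_mulVec] <;>
    module

theorem mul_eq_and_dotProduct_eq_of_oppBorelElem_eq {F S X U A S' : Matrix (Fin n) (Fin n) ℂ}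
    {ψ γ c : Fin n → ℂ} (hF : IsUnit F) (hX : IsUnit X) (hU : IsUnit U)
    (h : oppBorelElem F ψ S = borelElem X γ A * weylLongest n * borelElem U c S') :
    F * S = (Xᵀ)⁻¹ * U ∧ IsUnit S ∧ ψ ⬝ᵥ S⁻¹ *ᵥ ψ = (-1) ^ n - 1 := by
  rw [oppBorelElem, borelElem_mul_weylLongest_mul_borelElem, blk3_inj] at h
  obtain ⟨ha, hb, -, -, -, -, hg, hh, -⟩ := h
  have hFS : IsUnit (F * S) :=
    hh ▸ (isUnit_nonsing_inv_iff.mpr ((isUnit_transpose _).mpr hX)).mul hU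
  rw [isUnit_iff_isUnit_det, det_mul] at hFS
  have hS : IsUnit S.det := isUnit_of_mul_isUnit_right hFS
  have hc : S⁻¹ *ᵥ ψ = c := by
    rw [colV_inj, neg_inj, ← hh, ← mulVec_mulVec] at hg
    rw [mulVec_injective_iff_isUnit.mpr hF hg, mulVec_mulVec, nonsing_inv_mul _ hS, one_mulVec]
  refine ⟨hh, (isUnit_iff_isUnit_det S).mpr hS, ?_⟩
  have ha' : (1 : ℂ) = (-1) ^ n - γ ⬝ᵥ U *ᵥ c := by simpa using congrFun₂ ha 0 0
  rw [dotProduct_mulVec, ← rowV_inj.mp hb, ← hc] at ha'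
  linear_combination ha'

theorem oppBorelElem_eq_borelElem_mul_weylLongest_mul_borelElem
    {F S L U : Matrix (Fin n) (Fin n) ℂ} {ψ : Fin n → ℂ} (hS : S + Sᵀ = -vecMulVec ψ ψ)
    (hSu : IsUnit S) (hψ : ψ ⬝ᵥ S⁻¹ *ᵥ ψ = (-1) ^ n - 1) (hLU : F * S = L * U)
    (hL : IsUnit L) (hU : IsUnit U) :
    oppBorelElem F ψ S = borelElem (Lᵀ)⁻¹ (ψ ᵥ* U⁻¹) (U⁻¹ᵀ * Sᵀ * U⁻¹) * weylLongest n *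
      borelElem U (S⁻¹ *ᵥ ψ) S⁻¹ := by
  rw [isUnit_iff_isUnit_det] at hSu hL hU
  set c := S⁻¹ *ᵥ ψ with hc
  have ht : 1 + ψ ⬝ᵥ c = (-1) ^ n := by rw [hψ]; ring
  have hrow : ψ ᵥ* S⁻¹ = -((-1 : ℂ) ^ n • c) := ht ▸ vecMul_nonsing_inv hS hSu
  have hcol : Sᵀ *ᵥ c = -((-1 : ℂ) ^ n • ψ) := ht ▸ transpose_mulVec_nonsing_inv_mulVec hS hSu
  have hL' : (((Lᵀ)⁻¹)ᵀ)⁻¹ = L := by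
    rw [transpose_nonsing_inv, transpose_transpose, nonsing_inv_nonsing_inv _ hL]
  have hγ : ψ ᵥ* U⁻¹ ᵥ* U = ψ := by rw [vecMul_vecMul, nonsing_inv_mul _ hU, vecMul_one]
  have hAU : U⁻¹ᵀ * Sᵀ * U⁻¹ * U = U⁻¹ᵀ * Sᵀ := nonsing_inv_mul_cancel_right _ _ hU
  rw [oppBorelElem, borelElem_mul_weylLongest_mul_borelElem, hL']
  congr 1
  case e_a => rw [dotProduct_mulVec, hγ, hψ, sub_sub_cancel, one_smul]
  case e_b => rw [hγ]
  case e_c => rw [← vecMul_vecMul, hγ, hrow, add_neg_cancel, rowV_zero]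
  case e_d =>
    rw [hAU, ← mulVec_mulVec, hcol, mulVec_neg, mulVec_smul, mulVec_transpose, add_neg_cancel,
      mulVec_zero, neg_zero, colV_zero]
  case e_e =>
    rw [Matrix.mul_assoc, hAU, ← Matrix.mul_assoc, transpose_nonsing_inv U, ← Matrix.mul_inv_rev,
      ← transpose_mul, ← hLU, transpose_mul, Matrix.mul_inv_rev, Matrix.mul_assoc,
      nonsing_inv_mul _ (isUnit_det_transpose _ hSu), Matrix.mul_one, transpose_nonsing_inv]
  case e_f =>
    rw [← Matrix.mul_assoc _ U, hAU, Matrix.mul_assoc, transpose_mul_nonsing_inv hS hSu, hrow,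
      ← mulVec_transpose, ← mul_vecMulVec, transpose_nonsing_inv U, vecMulVec_neg, neg_neg,
      vecMulVec_smul, Matrix.mul_sub (Uᵀ)⁻¹, Matrix.mul_one, sub_add_cancel, Matrix.mul_smul,
      sub_self, Matrix.mul_zero]
  case e_g =>
    rw [← hLU, ← mulVec_mulVec, hc, mulVec_mulVec (M := S), mul_nonsing_inv _ hSu, one_mulVec]
  case e_k => rw [← hLU, mul_nonsing_inv_cancel_right _ _ hSu]

end Blocks

theorem bigcell_odd_orthogonal_general (n : ℕ)
    (F : Matrix (Fin n) (Fin n) ℂ) (ψ : Fin n → ℂ) (S : Matrix (Fin n) (Fin n) ℂ)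
    (hF_unit : IsUnit F)
    (hS : S + Sᵀ = -(vecMulVec ψ ψ)) :
    (∃ X U : Matrix (Fin n) (Fin n) ℂ, ∃ γ c : Fin n → ℂ,
      ∃ A S' : Matrix (Fin n) (Fin n) ℂ,
        (∀ i j : Fin n, j < i → X i j = 0) ∧ IsUnit X ∧
        (∀ i j : Fin n, j < i → U i j = 0) ∧ IsUnit U ∧
        A + Aᵀ = -(vecMulVec γ γ) ∧ S' + S'ᵀ = -(vecMulVec c c) ∧
        blk3 1 (rowV ψ) 0 0 (F⁻¹)ᵀ 0 (colV (-(F.mulVec ψ))) (F * S) F =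
          blk3 1 0 (rowV γ) (colV (-(X.mulVec γ))) X (X * A) 0 0 (Xᵀ)⁻¹ *
            blk3 (((-1 : ℂ) ^ n) • 1) 0 0 0 0 1 0 1 0 *
            blk3 1 0 (rowV c) (colV (-(U.mulVec c))) U (U * S') 0 0 (Uᵀ)⁻¹) ↔
    ((∃ L U' : Matrix (Fin n) (Fin n) ℂ,
        (∀ i j : Fin n, i < j → L i j = 0) ∧ IsUnit L ∧
        (∀ i j : Fin n, j < i → U' i j = 0) ∧ IsUnit U' ∧
        F * S = L * U') ∧
      IsUnit S ∧ ψ ⬝ᵥ S⁻¹.mulVec ψ = (-1 : ℂ) ^ n - 1) := by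
  constructor
  · rintro ⟨X, U, γ, c, A, S', hX, hXu, hU, hUu, -, -, hx⟩
    obtain ⟨hLU, hSu, hψ⟩ := mul_eq_and_dotProduct_eq_of_oppBorelElem_eq hF_unit hXu hUu hx
    exact ⟨⟨(Xᵀ)⁻¹, U, BlockTriangular.transpose_inv (b := id) hX hXu,
      isUnit_nonsing_inv_iff.mpr ((isUnit_transpose _).mpr hXu), hU, hUu, hLU⟩, hSu, hψ⟩
  · rintro ⟨⟨L, U, hL, hLu, hU, hUu, hLU⟩, hSu, hψ⟩
    refine ⟨(Lᵀ)⁻¹, U, ψ ᵥ* U⁻¹, S⁻¹ *ᵥ ψ, U⁻¹ᵀ * Sᵀ * U⁻¹, S⁻¹,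
      BlockTriangular.transpose_inv (b := OrderDual.toDual) hL hLu,
      isUnit_nonsing_inv_iff.mpr ((isUnit_transpose _).mpr hLu), hU, hUu,
      transpose_mul_mul_add_transpose U⁻¹ (transpose_add_transpose_transpose hS),
      nonsing_inv_add_transpose hS ((isUnit_iff_isUnit_det S).mp hSu),
      oppBorelElem_eq_borelElem_mul_weylLongest_mul_borelElem hS hSu hψ hLU hLu hUu⟩

/-- Remark "bigcell" of the paper, odd orthogonal case: the element
`x = [[1, ψᵀ, 0], [0, (F⁻¹)ᵀ, 0], [−Fψ, FΣ, F]]` of the opposite Borel of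
`SO(2n+1,ℂ)` lies in the cell `B·ẇ₀·B` if and only if `FΣ` lies in the big cell
of `GL_n(ℂ)` and `ψᵀΣ⁻¹ψ = (−1)ⁿ − 1`. -/
theorem bigcell_odd_orthogonal (n : ℕ) (hn : 1 ≤ n)
    (F : Matrix (Fin n) (Fin n) ℂ) (ψ : Fin n → ℂ) (S : Matrix (Fin n) (Fin n) ℂ)
    (hF_upper : ∀ i j : Fin n, j < i → F i j = 0) (hF_unit : IsUnit F)
    (hS : S + Sᵀ = -(vecMulVec ψ ψ)) :
    (∃ X U : Matrix (Fin n) (Fin n) ℂ, ∃ γ c : Fin n → ℂ,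
      ∃ A S' : Matrix (Fin n) (Fin n) ℂ,
        (∀ i j : Fin n, j < i → X i j = 0) ∧ IsUnit X ∧
        (∀ i j : Fin n, j < i → U i j = 0) ∧ IsUnit U ∧
        A + Aᵀ = -(vecMulVec γ γ) ∧ S' + S'ᵀ = -(vecMulVec c c) ∧
        blk3 1 (rowV ψ) 0 0 (F⁻¹)ᵀ 0 (colV (-(F.mulVec ψ))) (F * S) F =
          blk3 1 0 (rowV γ) (colV (-(X.mulVec γ))) X (X * A) 0 0 (Xᵀ)⁻¹ *
            blk3 (((-1 : ℂ) ^ n) • 1) 0 0 0 0 1 0 1 0 *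
            blk3 1 0 (rowV c) (colV (-(U.mulVec c))) U (U * S') 0 0 (Uᵀ)⁻¹) ↔
    ((∃ L U' : Matrix (Fin n) (Fin n) ℂ,
        (∀ i j : Fin n, i < j → L i j = 0) ∧ IsUnit L ∧
        (∀ i j : Fin n, j < i → U' i j = 0) ∧ IsUnit U' ∧
        F * S = L * U') ∧
      IsUnit S ∧ ψ ⬝ᵥ S⁻¹.mulVec ψ = (-1 : ℂ) ^ n - 1) :=
  bigcell_odd_orthogonal_general n F ψ S hF_unit hS
end

section
/- Let n and k be natural numbers with k ≤ n, and let P be the n×n complex diagonal matrix with P i i = 1 for i < k and all other entries 0 (so P² = P and Pᵀ = P). Define the 2n×2n matrices A_k = fromBlocks 1 0 P 1, U_k = fromBlocks 1 P 0 1, W_k = fromBlocks (1−P) P (−P) (1−P), and B_k = fromBlocks (1−2·P) (−P) 0 (1−2·P). Then: (a) A_k = U_k * W_k * B_k; (b) A_k and W_k belong to Sp(2n,ℂ); (c) U_k and B_k are upper triangular and invertible; (d) (A_k − 1)² = 0 and rank(A_k − 1) = k. -/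
open Matrix

/-- The standard symplectic form matrix `J₂ₙ = fromBlocks 0 Iₙ (−Iₙ) 0`. -/
def Jsymp (n : ℕ) : Matrix (Fin n ⊕ Fin n) (Fin n ⊕ Fin n) ℂ :=
  fromBlocks 0 1 (-1) 0

/-- Membership in the symplectic group `Sp(2n,ℂ)`: `M * J₂ₙ * Mᵀ = J₂ₙ`. -/
def IsSymplectic (n : ℕ) (M : Matrix (Fin n ⊕ Fin n) (Fin n ⊕ Fin n) ℂ) : Prop :=
  M * Jsymp n * Mᵀ = Jsymp n

/-- The diagonal projection `P` with `P i i = 1` for `i < k` and `0` otherwise. -/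
def Pproj (n k : ℕ) : Matrix (Fin n) (Fin n) ℂ :=
  Matrix.of fun i j => if i = j ∧ (i : ℕ) < k then 1 else 0

/-! Everything reduces to block arithmetic with a symmetric idempotent `P`: `1 - 2P` is an
involution, the blocks of `W_k` commute and satisfy `(1 - P)² + P² = 1`, and
`A_k - 1 = fromBlocks 0 0 P 0` squares to zero and has the rank of the diagonal matrix `P`. -/

theorem IsIdempotentElem.one_sub_two_nsmul_mul_self {R : Type*} [Ring R] {p : R}
    (hp : IsIdempotentElem p) : (1 - 2 • p) * (1 - 2 • p) = 1 := by
  simp only [two_smul, sub_mul, mul_sub, add_mul, mul_add, hp.eq, one_mul, mul_one]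
  abel

namespace Matrix

variable {l m R : Type*}

theorem BlockTriangular.fromBlocks_zero₂₁ {α : Type*} [Preorder α] [Zero R]
    {A : Matrix l l R} {B : Matrix l m R} {D : Matrix m m R} {b₁ : l → α} {b₂ : m → α}
    (hA : A.BlockTriangular b₁) (hD : D.BlockTriangular b₂) (hb : ∀ i j, b₁ i ≤ b₂ j) :
    (fromBlocks A B 0 D).BlockTriangular (Sum.elim b₁ b₂) := by
  rintro (i | i) (j | j) hij
  · exact hA hij
  · exact absurd hij (hb i j).not_gt
  · rfl
  · exact hD hij

section Ring

variable [Fintype l] [DecidableEq l] [Ring R]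

theorem fromBlocks_mul_symplecticForm_mul_transpose (A B C D : Matrix l l R) :
    fromBlocks A B C D * fromBlocks 0 1 (-1) 0 * (fromBlocks A B C D)ᵀ =
      fromBlocks (A * Bᵀ - B * Aᵀ) (A * Dᵀ - B * Cᵀ) (C * Bᵀ - D * Aᵀ) (C * Dᵀ - D * Cᵀ) := by
  simp only [fromBlocks_transpose, fromBlocks_multiply, Matrix.mul_zero, Matrix.mul_one,
    Matrix.mul_neg, zero_add, add_zero, Matrix.neg_mul, neg_add_eq_sub]

theorem fromBlocks_zero_zero_mul_self (C : Matrix l l R) :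
    fromBlocks 0 0 C 0 * fromBlocks 0 0 C 0 = (0 : Matrix (l ⊕ l) (l ⊕ l) R) := by
  simp [fromBlocks_multiply]

omit [Fintype l] in
theorem fromBlocks_one_zero_sub_one (C : Matrix l l R) :
    fromBlocks 1 0 C 1 - 1 = (fromBlocks 0 0 C 0 : Matrix (l ⊕ l) (l ⊕ l) R) := by
  rw [sub_eq_iff_eq_add, ← fromBlocks_one, fromBlocks_add]
  simp

theorem fromBlocks_one_zero_eq_mul_mul {P : Matrix l l R} (hP : IsIdempotentElem P) :
    fromBlocks 1 0 P 1 =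
      fromBlocks 1 P 0 1 * fromBlocks (1 - P) P (-P) (1 - P) *
        fromBlocks (1 - 2 • P) (-P) 0 (1 - 2 • P) := by
  simp only [fromBlocks_multiply, two_smul, mul_sub, sub_mul, mul_add, add_mul, hP.eq,
    Matrix.mul_one, Matrix.one_mul, Matrix.mul_zero, Matrix.zero_mul, Matrix.neg_mul,
    Matrix.mul_neg, neg_neg, fromBlocks_inj]
  refine ⟨?_, ?_, ?_, ?_⟩ <;> abel

end Ring

variable [Fintype l] [DecidableEq l]

theorem isUnit_fromBlocks_one_one [CommRing R] (B : Matrix l l R) :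
    IsUnit (fromBlocks 1 B 0 1 : Matrix (l ⊕ l) (l ⊕ l) R) :=
  isUnit_fromBlocks_zero₂₁.mpr ⟨isUnit_one, isUnit_one⟩

theorem isUnit_fromBlocks_one_sub_two_nsmul [CommRing R] {P : Matrix l l R}
    (hP : IsIdempotentElem P) (B : Matrix l l R) : IsUnit (fromBlocks (1 - 2 • P) B 0 (1 - 2 • P)) :=
  have h := hP.one_sub_two_nsmul_mul_self
  isUnit_fromBlocks_zero₂₁.mpr ⟨⟨⟨_, _, h, h⟩, rfl⟩, ⟨⟨_, _, h, h⟩, rfl⟩⟩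

theorem rank_fromBlocks_zero_zero_diagonal {K : Type*} [Field K] [DecidableEq K] (d : l → K) :
    (fromBlocks 0 0 (diagonal d) 0 : Matrix (l ⊕ l) (l ⊕ l) K).rank =
      Fintype.card {i // d i ≠ 0} := by
  rw [← rank_submatrix _ (Equiv.sumComm l l) (Equiv.refl _)]
  change rank ((fromBlocks 0 0 (diagonal d) 0).submatrix Sum.swap id) = _
  have h := fromBlocks_diagonal d (fun _ : l => (0 : K))
  rw [diagonal_zero] at h
  rw [fromBlocks_submatrix_sum_swap_left, submatrix_id_id, h, rank_diagonal,
    Fintype.card_congr Equiv.subtypeSum, Fintype.card_sum]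
  simp only [Sum.elim_inl, Sum.elim_inr, ne_eq, not_true_eq_false, Fintype.card_eq_zero, add_zero]
  exact Fintype.card_congr (.refl _)

end Matrix

theorem IsSymplectic.fromBlocks {n : ℕ} {A B C D : Matrix (Fin n) (Fin n) ℂ}
    (h₁ : A * Bᵀ = B * Aᵀ) (h₂ : C * Dᵀ = D * Cᵀ) (h₃ : A * Dᵀ - B * Cᵀ = 1) :
    IsSymplectic n (fromBlocks A B C D) := by
  have h₄ : D * Aᵀ - C * Bᵀ = 1 := by
    simpa [transpose_sub, transpose_mul] using congrArg transpose h₃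
  rw [IsSymplectic, Jsymp, fromBlocks_mul_symplecticForm_mul_transpose, sub_eq_zero.mpr h₁,
    sub_eq_zero.mpr h₂, h₃, ← neg_sub, h₄]

theorem isSymplectic_fromBlocks_one_zero {n : ℕ} {C : Matrix (Fin n) (Fin n) ℂ} (hC : C.IsSymm) :
    IsSymplectic n (fromBlocks 1 0 C 1) :=
  IsSymplectic.fromBlocks (by simp) (by simp [hC.eq]) (by simp)

theorem isSymplectic_fromBlocks_one_sub {n : ℕ} {P : Matrix (Fin n) (Fin n) ℂ}
    (hP : IsIdempotentElem P) (hPt : P.IsSymm) :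
    IsSymplectic n (fromBlocks (1 - P) P (-P) (1 - P)) := by
  refine IsSymplectic.fromBlocks ?_ ?_ ?_ <;>
    simp only [transpose_sub, transpose_one, transpose_neg, hPt.eq, Matrix.mul_neg,
      Matrix.neg_mul, hP.mul_one_sub_self, hP.one_sub_mul_self, hP.one_sub.eq, hP.eq,
      sub_neg_eq_add, sub_add_cancel]

theorem Pproj_eq_diagonal (n k : ℕ) :
    Pproj n k = diagonal (fun i : Fin n => if (i : ℕ) < k then (1 : ℂ) else 0) := by
  ext i j
  by_cases h : i = j <;> simp [Pproj, h]

theorem isIdempotentElem_Pproj (n k : ℕ) : IsIdempotentElem (Pproj n k) := by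
  rw [isIdempotentElem_iff, Pproj_eq_diagonal, diagonal_mul_diagonal]
  congr 1
  funext i
  split_ifs <;> simp

theorem isSymm_Pproj (n k : ℕ) : (Pproj n k).IsSymm := by
  rw [Pproj_eq_diagonal]
  exact isSymm_diagonal _

theorem blockTriangular_one_sub_two_nsmul_Pproj {α : Type*} [Preorder α] (n k : ℕ)
    (b : Fin n → α) : (1 - 2 • Pproj n k).BlockTriangular b := by
  rw [Pproj_eq_diagonal, ← diagonal_one, ← diagonal_smul, diagonal_sub]
  exact blockTriangular_diagonal _

theorem rank_fromBlocks_zero_zero_Pproj (n k : ℕ) (hk : k ≤ n) :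
    (fromBlocks 0 0 (Pproj n k) 0 : Matrix (Fin n ⊕ Fin n) (Fin n ⊕ Fin n) ℂ).rank = k := by
  rw [Pproj_eq_diagonal, rank_fromBlocks_zero_zero_diagonal]
  simpa using Fintype.card_fin_lt_of_le hk

/-- Proof of Theorem "classical-unipotent", type `Cₙ`: the representative
`A_k = fromBlocks 1 0 P 1` of the spherical unipotent class `X_{k,2n}` of
`Sp(2n,ℂ)` lies in the opposite Borel and in the Bruhat cell `B·ẇ_k·B`. -/
theorem typeC_unipotent_representative (n k : ℕ) (hk : k ≤ n) :
    (fromBlocks 1 0 (Pproj n k) 1 : Matrix (Fin n ⊕ Fin n) (Fin n ⊕ Fin n) ℂ) =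
        fromBlocks 1 (Pproj n k) 0 1 *
          fromBlocks (1 - Pproj n k) (Pproj n k) (-(Pproj n k)) (1 - Pproj n k) *
          fromBlocks (1 - 2 • Pproj n k) (-(Pproj n k)) 0 (1 - 2 • Pproj n k) ∧
    IsSymplectic n (fromBlocks 1 0 (Pproj n k) 1) ∧
    IsSymplectic n
      (fromBlocks (1 - Pproj n k) (Pproj n k) (-(Pproj n k)) (1 - Pproj n k)) ∧
    (∀ i j : Fin n ⊕ Fin n, ∀ hij : (Sum.elim Fin.val (fun i => n + i.val) j <
        Sum.elim Fin.val (fun i => n + i.val) i),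
      (fromBlocks 1 (Pproj n k) 0 1 : Matrix (Fin n ⊕ Fin n) (Fin n ⊕ Fin n) ℂ) i j = 0) ∧
    IsUnit (fromBlocks 1 (Pproj n k) 0 1 : Matrix (Fin n ⊕ Fin n) (Fin n ⊕ Fin n) ℂ) ∧
    (∀ i j : Fin n ⊕ Fin n, ∀ hij : (Sum.elim Fin.val (fun i => n + i.val) j <
        Sum.elim Fin.val (fun i => n + i.val) i),
      (fromBlocks (1 - 2 • Pproj n k) (-(Pproj n k)) 0 (1 - 2 • Pproj n k) :
        Matrix (Fin n ⊕ Fin n) (Fin n ⊕ Fin n) ℂ) i j = 0) ∧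
    IsUnit (fromBlocks (1 - 2 • Pproj n k) (-(Pproj n k)) 0 (1 - 2 • Pproj n k) :
        Matrix (Fin n ⊕ Fin n) (Fin n ⊕ Fin n) ℂ) ∧
    ((fromBlocks 1 0 (Pproj n k) 1 : Matrix (Fin n ⊕ Fin n) (Fin n ⊕ Fin n) ℂ) - 1) *
      ((fromBlocks 1 0 (Pproj n k) 1 : Matrix (Fin n ⊕ Fin n) (Fin n ⊕ Fin n) ℂ) - 1) = 0 ∧
    ((fromBlocks 1 0 (Pproj n k) 1 : Matrix (Fin n ⊕ Fin n) (Fin n ⊕ Fin n) ℂ) - 1).rank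
      = k := by
  have hP := isIdempotentElem_Pproj n k
  -- The triangularity conjuncts are `BlockTriangular _ (Sum.elim Fin.val (n + ·))` unfolded.
  have hb : ∀ i j : Fin n, (i : ℕ) ≤ n + j := fun i j => i.isLt.le.trans (Nat.le_add_right n j)
  refine ⟨fromBlocks_one_zero_eq_mul_mul hP, isSymplectic_fromBlocks_one_zero (isSymm_Pproj n k),
    isSymplectic_fromBlocks_one_sub hP (isSymm_Pproj n k),
    blockTriangular_one.fromBlocks_zero₂₁ blockTriangular_one hb, isUnit_fromBlocks_one_one _,
    (blockTriangular_one_sub_two_nsmul_Pproj n k _).fromBlocks_zero₂₁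
      (blockTriangular_one_sub_two_nsmul_Pproj n k _) hb,
    isUnit_fromBlocks_one_sub_two_nsmul hP _, ?_, ?_⟩
  · rw [fromBlocks_one_zero_sub_one, fromBlocks_zero_zero_mul_self]
  · rw [fromBlocks_one_zero_sub_one, rank_fromBlocks_zero_zero_Pproj n k hk]
end

section
/- Let A be an n×n real matrix with Aᵀ * A = 1 (i.e., A is orthogonal). Then det A = (−1)^(rank(1 − A)). -/
/-!
The determinant of `f` is the product of the determinants of its restriction to
`R = range (1 - f)` and of the map it induces on the quotient by `R`; the latter is the identity
because `x - f x ∈ R`. For orthogonal `f`, a fixed vector is orthogonal to `R`, so `1 - f` is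
injective on `R`, and taking determinants in `f* (1 - f) = -(1 - f)*` on `R` gives
`det f = (-1) ^ dim R = (-1) ^ rank (1 - A)`.
-/

open Matrix Module LinearMap
open scoped InnerProductSpace

theorem LinearMap.range_one_sub_le_comap {R M : Type*} [Ring R] [AddCommGroup M] [Module R M]
    (f : M →ₗ[R] M) : range (1 - f) ≤ (range (1 - f)).comap f := by
  rintro _ ⟨y, rfl⟩
  exact ⟨f y, by simp only [sub_apply, Module.End.one_apply, map_sub]⟩

theorem LinearMap.det_eq_det_restrict_range_one_sub {K V : Type*} [Field K] [AddCommGroup V]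
    [Module K V] [FiniteDimensional K V] (f : V →ₗ[K] V) :
    f.det = (f.restrict f.range_one_sub_le_comap).det := by
  have hquot : (range (1 - f)).mapQ (range (1 - f)) f f.range_one_sub_le_comap = 1 := by
    refine Submodule.linearMap_qext _ (LinearMap.ext fun x => ?_)
    simp only [coe_comp, Function.comp_apply, Submodule.mkQ_apply, Submodule.mapQ_apply,
      Module.End.one_apply]
    rw [eq_comm, Submodule.Quotient.eq]
    exact ⟨x, rfl⟩
  rw [det_eq_det_mul_det _ f f.range_one_sub_le_comap, hquot, map_one, mul_one]

theorem LinearMap.det_adjoint {𝕜 E : Type*} [RCLike 𝕜] [NormedAddCommGroup E]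
    [InnerProductSpace 𝕜 E] [FiniteDimensional 𝕜 E] (f : E →ₗ[𝕜] E) :
    (adjoint f).det = star f.det := by
  let b := stdOrthonormalBasis 𝕜 E
  rw [← det_toMatrix b.toBasis, toMatrix_adjoint, det_conjTranspose, det_toMatrix]

section Real

variable {E : Type*} [NormedAddCommGroup E] [InnerProductSpace ℝ E]

theorem LinearMap.adjoint_mul_self_of_inner_map_map [FiniteDimensional ℝ E] {f : E →ₗ[ℝ] E}
    (hf : ∀ x y, ⟪f x, f y⟫_ℝ = ⟪x, y⟫_ℝ) : adjoint f * f = 1 := by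
  refine LinearMap.ext fun y => ext_inner_left ℝ fun x => ?_
  rw [Module.End.mul_apply, adjoint_inner_right, hf, Module.End.one_apply]

theorem LinearMap.disjoint_ker_range_one_sub {f : E →ₗ[ℝ] E}
    (hf : ∀ x y, ⟪f x, f y⟫_ℝ = ⟪x, y⟫_ℝ) : Disjoint (ker (1 - f)) (range (1 - f)) := by
  rw [Submodule.disjoint_def]
  rintro x hx ⟨y, rfl⟩
  set x := (1 - f) y
  have hfix : f x = x := by
    rw [mem_ker, sub_apply, Module.End.one_apply, sub_eq_zero] at hx; exact hx.symm
  have hxy : x = y - f y := rfl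
  refine inner_self_eq_zero (𝕜 := ℝ) |>.mp ?_
  calc ⟪x, x⟫_ℝ = ⟪x, y⟫_ℝ - ⟪f x, f y⟫_ℝ := by rw [hfix, ← inner_sub_right, ← hxy]
    _ = 0 := by rw [hf, sub_self]

theorem LinearMap.det_eq_neg_one_pow_finrank_of_ker_one_sub_eq_bot [FiniteDimensional ℝ E]
    {f : E →ₗ[ℝ] E} (hf : ∀ x y, ⟪f x, f y⟫_ℝ = ⟪x, y⟫_ℝ) (hker : ker (1 - f) = ⊥) :
    f.det = (-1) ^ finrank ℝ E := by
  have hdet : (1 - f).det ≠ 0 := fun h => det_eq_zero_iff_ker_ne_bot.mp h hker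
  have key : adjoint f * (1 - f) = (-1 : ℝ) • adjoint (1 - f) := by
    rw [mul_sub, mul_one, adjoint_mul_self_of_inner_map_map hf, map_sub, adjoint_one,
      neg_one_smul, neg_sub]
  have := congrArg LinearMap.det key
  rw [map_mul, det_smul, det_adjoint, det_adjoint] at this
  exact mul_right_cancel₀ hdet (by simpa using this)

theorem LinearMap.det_eq_neg_one_pow_finrank_range_one_sub [FiniteDimensional ℝ E]
    {f : E →ₗ[ℝ] E} (hf : ∀ x y, ⟪f x, f y⟫_ℝ = ⟪x, y⟫_ℝ) :
    f.det = (-1) ^ finrank ℝ (range (1 - f)) := by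
  rw [det_eq_det_restrict_range_one_sub]
  refine det_eq_neg_one_pow_finrank_of_ker_one_sub_eq_bot (fun x y => hf x y) ?_
  refine (Submodule.eq_bot_iff _).mpr fun x hx => Subtype.ext ?_
  have hfix : (x : E) ∈ ker (1 - f) := by
    simpa [sub_eq_zero, Subtype.ext_iff] using hx
  exact Submodule.disjoint_def.mp (disjoint_ker_range_one_sub hf) x hfix x.2

end Real

theorem Matrix.inner_toEuclideanLin_of_conjTranspose_mul_self_eq_one {𝕜 n : Type*} [RCLike 𝕜]
    [Fintype n] [DecidableEq n] {A : Matrix n n 𝕜} (hA : Aᴴ * A = 1)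
    (x y : EuclideanSpace 𝕜 n) : ⟪toEuclideanLin A x, toEuclideanLin A y⟫_𝕜 = ⟪x, y⟫_𝕜 := by
  rw [← adjoint_inner_right, ← toEuclideanLin_conjTranspose_eq_adjoint, ← LinearMap.comp_apply,
    ← toLpLin_mul_same, hA, toLpLin_one, id_apply]

/-- For an orthogonal real matrix `A`, `det A = (−1)^{rank(1 − A)}`. -/
theorem det_orthogonal_eq_neg_one_pow_rank (n : ℕ) (A : Matrix (Fin n) (Fin n) ℝ)
    (hA : Aᵀ * A = 1) :
    A.det = (-1 : ℝ) ^ (1 - A).rank := by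
  let b := (EuclideanSpace.basisFun (Fin n) ℝ).toBasis
  have hf := inner_toEuclideanLin_of_conjTranspose_mul_self_eq_one (A := A)
    (by rwa [conjTranspose_eq_transpose_of_trivial])
  rw [← det_toLin b A, rank_eq_finrank_range_toLin _ b b, map_sub, toLin_one,
    ← toEuclideanLin_eq_toLin_orthonormal]
  exact det_eq_neg_one_pow_finrank_range_one_sub hf
end

section
/- Let A and R be n×n real matrices with Aᵀ*A = 1, Rᵀ*R = 1 and rank(1 − R) = 1. Then rank(1 − A*R) = rank(1 − A) + 1 or rank(1 − A*R) = rank(1 − A) − 1. -/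
/-!
For an orthogonal map `φ` of a Euclidean space, `det φ = (-1) ^ rank (1 - φ)`: composing `φ` with
the reflection in its fixed subspace `K` multiplies the determinant by `(-1) ^ dim Kᗮ` and produces
an orthogonal map `ψ` without the eigenvalue `-1`, whose determinant is `1` because
`ψ (1 + ψ)ᵀ = ψ + 1` with `1 + ψ` invertible; and
`dim Kᗮ = rank (1 - φ)`. Since `1 - A R = (1 - A) + A (1 - R)` and `1 - A = (1 - A R) - A (1 - R)`
with `rank (A (1 - R)) ≤ 1`, the two ranks differ by at most one; since `det R = -1` they have
different parities.
-/

open Matrix Module LinearMap Submodule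

namespace LinearMap

theorem finrank_range_add_le {K V W : Type*} [DivisionRing K] [AddCommGroup V] [Module K V]
    [AddCommGroup W] [Module K W] [FiniteDimensional K V] (f g : V →ₗ[K] W) :
    finrank K (range (f + g)) ≤ finrank K (range f) + finrank K (range g) :=
  (Submodule.finrank_mono (range_add_le f g)).trans (finrank_add_le_finrank_add_finrank _ _)

theorem finrank_range_add_mul_le {K V : Type*} [DivisionRing K] [AddCommGroup V] [Module K V]
    [FiniteDimensional K V] (a f h : Module.End K V) :
    finrank K (range (a + f * h)) ≤ finrank K (range a) + finrank K (range h) := by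
  grw [finrank_range_add_le, Module.End.mul_eq_comp, range_comp, Submodule.finrank_map_le]

theorem det_adjoint_s8 {𝕜 E : Type*} [RCLike 𝕜] [NormedAddCommGroup E] [InnerProductSpace 𝕜 E]
    [FiniteDimensional 𝕜 E] (f : E →ₗ[𝕜] E) : (adjoint f).det = star f.det := by
  let b := stdOrthonormalBasis 𝕜 E
  rw [← det_toMatrix b.toBasis, toMatrix_adjoint, Matrix.det_conjTranspose, det_toMatrix]

end LinearMap

namespace LinearIsometryEquiv

variable {E : Type*} [NormedAddCommGroup E] [InnerProductSpace ℝ E] [FiniteDimensional ℝ E]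

theorem det_eq_one_of_ker_one_add_eq_bot (ψ : E ≃ₗᵢ[ℝ] E) (h : ker (1 + ψ.toLinearMap) = ⊥) :
    ψ.toLinearMap.det = 1 := by
  have hne : (1 + ψ.toLinearMap).det ≠ 0 := by rwa [Ne, det_eq_zero_iff_ker_ne_bot, not_not]
  have key : ψ.toLinearMap ∘ₗ adjoint (1 + ψ.toLinearMap) = 1 + ψ.toLinearMap := by
    rw [LinearEquiv.map_add, Module.End.one_eq_id, adjoint_id, ψ.adjoint_toLinearMap_eq_symm,
      comp_add, add_comm]
    ext; simp
  have hdet := congrArg LinearMap.det key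
  rw [det_comp, det_adjoint_s8, star_trivial] at hdet
  exact mul_right_cancel₀ hne (hdet.trans (one_mul _).symm)

theorem eq_zero_of_apply_reflection_ker_eq_neg (φ : E ≃ₗᵢ[ℝ] E) {v : E}
    (hv : φ ((ker (1 - φ.toLinearMap)).reflection v) = -v) : v = 0 := by
  set K := ker (1 - φ.toLinearMap)
  have hfix (x : E) : x ∈ K ↔ φ x = x := by
    rw [mem_ker, LinearMap.sub_apply, Module.End.one_apply, sub_eq_zero, eq_comm]
    rfl
  have hvK : v ∈ Kᗮ := by
    intro k hk
    have h₁ : inner ℝ k v = inner ℝ k (K.reflection v) := by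
      rw [← K.reflection_mem_subspace_eq_self hk, K.reflection.inner_map_map,
        K.reflection_mem_subspace_eq_self hk]
    have h₂ : inner ℝ k (K.reflection v) = -inner ℝ k v := by
      rw [← φ.inner_map_map, (hfix k).1 hk, hv, inner_neg_right]
    linarith
  have hφv : φ v = v := by
    rwa [K.reflection_mem_subspace_orthogonalComplement_eq_neg hvK, map_neg, neg_inj] at hv
  exact inner_self_eq_zero.mp (hvK v ((hfix v).2 hφv))

theorem det_eq_neg_one_pow_finrank_range (φ : E ≃ₗᵢ[ℝ] E) :
    φ.toLinearMap.det = (-1) ^ finrank ℝ (range (1 - φ.toLinearMap)) := by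
  set K := ker (1 - φ.toLinearMap)
  have hψ : (K.reflection.trans φ).toLinearMap.det = 1 := by
    refine det_eq_one_of_ker_one_add_eq_bot _ (ker_eq_bot'.2 fun v hv => ?_)
    refine φ.eq_zero_of_apply_reflection_ker_eq_neg (eq_neg_of_add_eq_zero_right ?_)
    simpa using hv
  have hrank : finrank ℝ (range (1 - φ.toLinearMap)) = finrank ℝ Kᗮ := by
    have h₁ : finrank ℝ (range (1 - φ.toLinearMap)) + finrank ℝ K = finrank ℝ E :=
      (1 - φ.toLinearMap).finrank_range_add_finrank_ker
    have h₂ := K.finrank_add_finrank_orthogonal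
    omega
  rw [show (K.reflection.trans φ).toLinearMap = φ.toLinearMap ∘ₗ K.reflection.toLinearMap from rfl,
    det_comp, det_reflection, ← hrank] at hψ
  calc φ.toLinearMap.det
      = φ.toLinearMap.det * (-1) ^ finrank ℝ (range (1 - φ.toLinearMap)) *
          (-1) ^ finrank ℝ (range (1 - φ.toLinearMap)) := by
        rw [mul_assoc, ← mul_pow]; norm_num
    _ = _ := by rw [hψ, one_mul]

theorem finrank_range_one_sub_mul_reflection (φ ρ : E ≃ₗᵢ[ℝ] E)
    (hρ : finrank ℝ (range (1 - ρ.toLinearMap)) = 1) :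
    finrank ℝ (range (1 - φ.toLinearMap * ρ.toLinearMap)) =
        finrank ℝ (range (1 - φ.toLinearMap)) + 1 ∨
      finrank ℝ (range (1 - φ.toLinearMap * ρ.toLinearMap)) =
        finrank ℝ (range (1 - φ.toLinearMap)) - 1 := by
  set f := φ.toLinearMap
  set g := ρ.toLinearMap
  have hle : finrank ℝ (range (1 - f * g)) ≤ finrank ℝ (range (1 - f)) + 1 := by
    rw [show 1 - f * g = (1 - f) + f * (1 - g) by noncomm_ring, ← hρ]
    exact finrank_range_add_mul_le _ _ _
  have hge : finrank ℝ (range (1 - f)) ≤ finrank ℝ (range (1 - f * g)) + 1 := by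
    rw [show 1 - f = (1 - f * g) + f * -(1 - g) by noncomm_ring, ← hρ, ← range_neg (1 - g)]
    exact finrank_range_add_mul_le _ _ _
  have hne : finrank ℝ (range (1 - f * g)) ≠ finrank ℝ (range (1 - f)) := by
    intro heq
    have hfg : (f * g).det = (-1) ^ finrank ℝ (range (1 - f * g)) :=
      (φ * ρ).det_eq_neg_one_pow_finrank_range
    have hf : f.det = (-1) ^ finrank ℝ (range (1 - f)) := φ.det_eq_neg_one_pow_finrank_range
    have hdet : (f * g).det = f.det * g.det := map_mul _ _ _
    rw [hfg, hf, ρ.det_eq_neg_one_pow_finrank_range, hρ, heq, pow_one, mul_neg_one] at hdet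
    exact pow_ne_zero _ (by norm_num : (-1 : ℝ) ≠ 0) (self_eq_neg.1 hdet)
  omega

end LinearIsometryEquiv

namespace Matrix

theorem rank_eq_finrank_range_toLpLin {R m n : Type*} [Finite m] [Fintype n] [DecidableEq n]
    [CommRing R] (p q : ENNReal) (M : Matrix m n R) :
    M.rank = finrank R (range (toLpLin p q M)) := by
  rw [toLpLin_eq_toLin]
  exact M.rank_eq_finrank_range_toLin _ _

theorem exists_linearIsometryEquiv_toEuclideanLin {ι : Type*} [Fintype ι] [DecidableEq ι]
    {A : Matrix ι ι ℝ} (hA : Aᵀ * A = 1) :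
    ∃ φ : EuclideanSpace ℝ ι ≃ₗᵢ[ℝ] EuclideanSpace ℝ ι, φ.toLinearMap = toEuclideanLin A := by
  have hA' : A ∈ unitary (Matrix ι ι ℝ) := by
    rwa [← unitaryGroup, mem_unitaryGroup_iff', star_eq_conjTranspose,
      conjTranspose_eq_transpose_of_trivial]
  exact ⟨Unitary.linearIsometryEquiv ⟨toEuclideanCLM (n := ι) (𝕜 := ℝ) A, Unitary.map_mem _ hA'⟩,
    rfl⟩

end Matrix

/-- If `A` and `R` are orthogonal real matrices and `R` is a reflection
(`rank(1 − R) = 1`), then `rank(1 − A·R) = rank(1 − A) ± 1`. -/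
theorem rank_one_sub_mul_reflection (n : ℕ) (A R : Matrix (Fin n) (Fin n) ℝ)
    (hA : Aᵀ * A = 1) (hR : Rᵀ * R = 1) (hrk : (1 - R).rank = 1) :
    (1 - A * R).rank = (1 - A).rank + 1 ∨ (1 - A * R).rank = (1 - A).rank - 1 := by
  obtain ⟨φ, hφ⟩ := exists_linearIsometryEquiv_toEuclideanLin hA
  obtain ⟨ρ, hρ⟩ := exists_linearIsometryEquiv_toEuclideanLin hR
  have hrank (M : Matrix (Fin n) (Fin n) ℝ) :
      (1 - M).rank = finrank ℝ (range (1 - toEuclideanLin M)) := by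
    rw [rank_eq_finrank_range_toLpLin 2 2, map_sub, toLpLin_one, Module.End.one_eq_id]
  rw [hrank, hrank, toLpLin_mul_same, ← Module.End.mul_eq_comp, ← hφ, ← hρ]
  rw [hrank, ← hρ] at hrk
  exact φ.finrank_range_one_sub_mul_reflection ρ hrk
end

section
/- Let R be a commutative ring, n ≥ 1 and a ∈ R. Let M be the n×n tridiagonal matrix over R with M 0 0 = a, M i i = 0 for i ≠ 0, M i (i+1) = 1 and M (i+1) i = −1 for 0 ≤ i < n−1, and all other entries 0. Then det M = a if n is odd, and det M = 1 if n is even. -/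
open Matrix Finset

private def Tmat {R : Type*} [CommRing R] (n : ℕ) (a : R) : Matrix (Fin n) (Fin n) R :=
  Matrix.of fun i j : Fin n =>
    if (i : ℕ) = (j : ℕ) then (if (i : ℕ) = 0 then a else 0)
    else if (j : ℕ) = (i : ℕ) + 1 then 1
    else if (i : ℕ) = (j : ℕ) + 1 then -1
    else 0

private lemma Tmat_apply {R : Type*} [CommRing R] (n : ℕ) (a : R) (i j : Fin n) :
    Tmat n a i j =
      if (i : ℕ) = (j : ℕ) then (if (i : ℕ) = 0 then a else 0)
      else if (j : ℕ) = (i : ℕ) + 1 then 1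
      else if (i : ℕ) = (j : ℕ) + 1 then -1
      else 0 := rfl

private lemma Tmat_key {R : Type*} [CommRing R] (n : ℕ) (a : R) :
    (Tmat (n + 2) a).det = (Tmat n a).det := by
  have j0 : Fin (n+2) := ⟨n, by omega⟩
  rw [Matrix.det_succ_row (Tmat (n+2) a) (Fin.last (n+1)),
    Finset.sum_eq_single (⟨n, by omega⟩ : Fin (n+2))]
  rotate_left
  · intro j _ hj
    have hjn : (j : ℕ) ≠ n := fun h => hj (Fin.ext h)
    have hjlt := j.isLt
    have hz : Tmat (n+2) a (Fin.last (n+1)) j = 0 := by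
      rw [Tmat_apply]
      simp only [Fin.val_last]
      split_ifs <;> first | rfl | omega | contradiction
    rw [hz]; ring
  · intro h; exact absurd (Finset.mem_univ _) h
  · have he : Tmat (n+2) a (Fin.last (n+1)) ⟨n, by omega⟩ = -1 := by
      rw [Tmat_apply]
      simp only [Fin.val_last]
      split_ifs <;> first | rfl | omega | contradiction
    rw [he]
    have hpow : ((Fin.last (n+1) : Fin (n+2)) : ℕ) + ((⟨n, by omega⟩ : Fin (n+2)) : ℕ)
        = 2*n + 1 := by simp [Fin.val_last]; omega
    rw [hpow]
    have hpow2 : ((-1 : R)) ^ (2*n+1) = -1 := Odd.neg_one_pow ⟨n, by ring⟩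
    rw [hpow2, Matrix.det_succ_column _ (Fin.last n),
      Finset.sum_eq_single (Fin.last n)]
    rotate_left
    · intro i _ hi
      have hin : (i : ℕ) ≠ n := fun h => hi (Fin.ext h)
      have hilt := i.isLt
      have hcol : (((⟨n, by omega⟩ : Fin (n+2)).succAbove (Fin.last n)) : ℕ) = n + 1 := by
        rw [Fin.succAbove_of_le_castSucc _ _ (by simp [Fin.le_def])]
        simp
      have hz : ((Tmat (n+2) a).submatrix (Fin.last (n+1)).succAbove
          (⟨n, by omega⟩ : Fin (n+2)).succAbove) i (Fin.last n) = 0 := by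
        rw [Matrix.submatrix_apply, Tmat_apply]
        rw [Fin.succAbove_last]
        simp only [hcol, Fin.coe_castSucc]
        split_ifs <;> first | rfl | omega | contradiction
      rw [hz]; ring
    · intro h; exact absurd (Finset.mem_univ _) h
    · have hcol : (((⟨n, by omega⟩ : Fin (n+2)).succAbove (Fin.last n)) : ℕ) = n + 1 := by
        rw [Fin.succAbove_of_le_castSucc _ _ (by simp [Fin.le_def])]
        simp
      have he2 : ((Tmat (n+2) a).submatrix (Fin.last (n+1)).succAbove
          (⟨n, by omega⟩ : Fin (n+2)).succAbove) (Fin.last n) (Fin.last n) = 1 := by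
        rw [Matrix.submatrix_apply, Tmat_apply, Fin.succAbove_last]
        simp only [hcol, Fin.coe_castSucc, Fin.val_last]
        split_ifs <;> first | rfl | omega | contradiction
      rw [he2]
      have hr : ∀ k : Fin n,
          (((Fin.last (n+1)).succAbove ((Fin.last n).succAbove k)) : ℕ) = k := by
        intro k
        rw [Fin.succAbove_last, Fin.succAbove_of_castSucc_lt _ _ (by simpa [Fin.lt_def] using k.isLt)]
        simp
      have hc : ∀ k : Fin n,
          (((⟨n, by omega⟩ : Fin (n+2)).succAbove ((Fin.last n).succAbove k)) : ℕ) = k := by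
        intro k
        rw [Fin.succAbove_last,
          Fin.succAbove_of_castSucc_lt _ _ (by simpa [Fin.lt_def] using k.isLt)]
        simp
      have hsub : (((Tmat (n+2) a).submatrix (Fin.last (n+1)).succAbove
          (⟨n, by omega⟩ : Fin (n+2)).succAbove).submatrix
          (Fin.last n).succAbove (Fin.last n).succAbove) = Tmat n a := by
        ext i j
        rw [Matrix.submatrix_apply, Matrix.submatrix_apply, Tmat_apply, Tmat_apply,
          hr i, hc j]
      rw [hsub]
      have : ((Fin.last n : ℕ) + (Fin.last n : ℕ)) = 2*n := by
        simp [Fin.val_last]; ring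
      rw [this]
      have h1 : ((-1 : R)) ^ (2*n) = 1 := by
        rw [pow_mul]; norm_num
      rw [h1]; ring

/-- Determinant of the tridiagonal matrix with `a` in the `(0,0)` entry, `0`
elsewhere on the diagonal, `1` on the superdiagonal, and `−1` on the
subdiagonal: it equals `a` when `n` is odd and `1` when `n` is even. -/
theorem det_tridiagonal_skew {R : Type*} [CommRing R] (n : ℕ) (hn : 1 ≤ n) (a : R) :
    (Matrix.of fun i j : Fin n =>
        if (i : ℕ) = (j : ℕ) then (if (i : ℕ) = 0 then a else 0)
        else if (j : ℕ) = (i : ℕ) + 1 then 1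
        else if (i : ℕ) = (j : ℕ) + 1 then -1
        else 0).det = if Odd n then a else 1 := by
  show (Tmat n a).det = _
  induction n using Nat.strong_induction_on with
  | _ n ih =>
    match n, hn with
    | 1, _ => simp [Tmat, Matrix.det_fin_one]
    | 2, _ =>
      rw [Matrix.det_fin_two]
      norm_num [Tmat, Nat.odd_iff]
    | (m+3), _ =>
      rw [show m + 3 = (m+1) + 2 from rfl, Tmat_key, ih (m+1) (by omega) (by omega)]
      have : Odd (m + 3) ↔ Odd (m + 1) := by rw [Nat.odd_iff, Nat.odd_iff]; omega
      simp [this]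
end

section
/- Let K be a field, n ≥ 1 and a ∈ K with a ≠ 0. Let M be the n×n tridiagonal matrix over K with M 0 0 = a, M i i = 0 for i ≠ 0, M i (i+1) = 1 and M (i+1) i = −1 for 0 ≤ i < n−1, and all other entries 0. Then M is invertible, and the (0,0) entry of M⁻¹ equals a⁻¹ if n is odd and 0 if n is even. -/
/-!
If `M y = c e₀` and `y` is padded by zeros beyond `n`, row `i > 0` reads `y (i + 1) = y (i - 1)`:
so `y` is `2`-periodic up to index `n`, and `y n = 0` kills the parity class of `n`. Row `0`,
`a y₀ + y₁ = c`, then fixes the other class. For `c = 0` this shows that `M` is injective, and for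
`c = 1` it computes the first column of `M⁻¹`.
-/

open Finset Matrix

lemma apply_eq_apply_mod_two_of_add_two {α : Type*} {n : ℕ} {y : ℕ → α}
    (hstep : ∀ m, m + 2 ≤ n → y (m + 2) = y m) : ∀ j ≤ n, y j = y (j % 2)
  | 0, _ => rfl
  | 1, _ => rfl
  | m + 2, hj => by
    rw [hstep m hj, apply_eq_apply_mod_two_of_add_two hstep m (by omega), Nat.add_mod_right]

section

variable {K : Type*} [Field K]

def skewTridiag (a : K) (i j : ℕ) : K :=
  if i = j then (if i = 0 then a else 0)
  else if j = i + 1 then 1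
  else if i = j + 1 then -1
  else 0

def skewTridiagMatrix (n : ℕ) (a : K) : Matrix (Fin n) (Fin n) K :=
  Matrix.of fun i j => skewTridiag a i j

-- `i - 1` truncates at `0`; the `i = 0` guard removes the spurious subdiagonal term there.
lemma skewTridiag_mul (a : K) (y : ℕ → K) (i j : ℕ) :
    skewTridiag a i j * y j =
      (if j = i then (if i = 0 then a * y j else 0) else 0) + (if j = i + 1 then y j else 0) +
        (if j = i - 1 then (if i = 0 then 0 else -y j) else 0) := by
  unfold skewTridiag
  split_ifs <;> first | omega | simp

lemma sum_range_skewTridiag_mul (a : K) {n : ℕ} {y : ℕ → K} (hy : ∀ j, n ≤ j → y j = 0)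
    {i : ℕ} (hi : i < n) :
    ∑ j ∈ range n, skewTridiag a i j * y j =
      (if i = 0 then a * y 0 else -y (i - 1)) + y (i + 1) := by
  have hsucc : (if i + 1 < n then y (i + 1) else 0) = y (i + 1) := by
    split_ifs with h
    · rfl
    · exact (hy _ (not_lt.mp h)).symm
  simp only [skewTridiag_mul, sum_add_distrib, sum_ite_eq', mem_range, hsucc, if_pos hi,
    if_pos (show i - 1 < n by omega)]
  split_ifs with h0
  · simp [h0]
  · ring

def padZero {n : ℕ} (x : Fin n → K) (j : ℕ) : K :=
  if h : j < n then x ⟨j, h⟩ else 0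

lemma padZero_of_le {n : ℕ} (x : Fin n → K) {j : ℕ} (hj : n ≤ j) : padZero x j = 0 :=
  dif_neg (not_lt.mpr hj)

lemma skewTridiagMatrix_mulVec_apply {n : ℕ} (a : K) (x : Fin n → K) (i : Fin n) :
    (skewTridiagMatrix n a *ᵥ x) i =
      (if (i : ℕ) = 0 then a * padZero x 0 else -padZero x (i - 1)) + padZero x (i + 1) := by
  rw [← sum_range_skewTridiag_mul a (fun j => padZero_of_le x) i.isLt,
    ← Fin.sum_univ_eq_sum_range (fun j => skewTridiag a i j * padZero x j)]
  simp [Matrix.mulVec, dotProduct, skewTridiagMatrix, padZero]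

lemma apply_eq_of_skewTridiag_rows {n : ℕ} (hn : 0 < n) {a : K} (ha : a ≠ 0) {c : K} {y : ℕ → K}
    (hy : ∀ j, n ≤ j → y j = 0)
    (hrow : ∀ i < n, (if i = 0 then a * y 0 else -y (i - 1)) + y (i + 1) = if i = 0 then c else 0)
    {j : ℕ} (hj : j < n) :
    y j = if Even j then (if Odd n then c / a else 0) else (if Odd n then 0 else c) := by
  have hstep : ∀ m, m + 2 ≤ n → y (m + 2) = y m := fun m hm => by
    have := hrow (m + 1) (by omega)
    simp only [add_tsub_cancel_right, if_neg m.succ_ne_zero] at this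
    linear_combination this
  have hmod := apply_eq_apply_mod_two_of_add_two hstep
  have hlast : y (n % 2) = 0 := hmod n le_rfl ▸ hy n le_rfl
  have hfirst : a * y 0 + y 1 = c := by simpa using hrow 0 hn
  obtain ⟨hy0, hy1⟩ : y 0 = (if Odd n then c / a else 0) ∧ y 1 = if Odd n then 0 else c := by
    rcases Nat.even_or_odd n with hn2 | hn2
    · rw [Nat.even_iff.mp hn2] at hlast
      rw [if_neg (Nat.not_odd_iff_even.mpr hn2), if_neg (Nat.not_odd_iff_even.mpr hn2)]
      exact ⟨hlast, by linear_combination hfirst - a * hlast⟩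
    · rw [Nat.odd_iff.mp hn2] at hlast
      rw [if_pos hn2, if_pos hn2, eq_div_iff ha]
      exact ⟨by linear_combination hfirst - hlast, hlast⟩
  rw [hmod j hj.le]
  rcases Nat.even_or_odd j with hj2 | hj2
  · rw [Nat.even_iff.mp hj2, if_pos hj2, hy0]
  · rw [Nat.odd_iff.mp hj2, if_neg (Nat.not_even_iff_odd.mpr hj2), hy1]

lemma skewTridiagMatrix_apply_of_mulVec_eq_single {n : ℕ} (hn : 0 < n) {a : K} (ha : a ≠ 0)
    {c : K} {x : Fin n → K} (h : skewTridiagMatrix n a *ᵥ x = Pi.single ⟨0, hn⟩ c) (j : Fin n) :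
    x j = if Even (j : ℕ) then (if Odd n then c / a else 0) else (if Odd n then 0 else c) := by
  have hrow : ∀ i < n, (if i = 0 then a * padZero x 0 else -padZero x (i - 1)) +
      padZero x (i + 1) = if i = 0 then c else 0 := fun i hi => by
    rw [← skewTridiagMatrix_mulVec_apply a x ⟨i, hi⟩, h]
    simp [Pi.single_apply, Fin.ext_iff]
  simpa [padZero] using apply_eq_of_skewTridiag_rows hn ha (fun j => padZero_of_le x) hrow j.isLt

lemma isUnit_skewTridiagMatrix {n : ℕ} (hn : 0 < n) {a : K} (ha : a ≠ 0) :
    IsUnit (skewTridiagMatrix n a) := by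
  rw [← mulVec_injective_iff_isUnit]
  intro x x' h
  funext j
  have hsub : skewTridiagMatrix n a *ᵥ (x - x') = Pi.single ⟨0, hn⟩ 0 := by
    rw [mulVec_sub, h, sub_self, Pi.single_zero]
  simpa [sub_eq_zero] using skewTridiagMatrix_apply_of_mulVec_eq_single hn ha hsub j

lemma inv_skewTridiagMatrix_apply_zero_zero {n : ℕ} (hn : 0 < n) {a : K} (ha : a ≠ 0) :
    (skewTridiagMatrix n a)⁻¹ ⟨0, hn⟩ ⟨0, hn⟩ = if Odd n then a⁻¹ else 0 := by
  set M := skewTridiagMatrix n a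
  have hdet : IsUnit M.det := (isUnit_iff_isUnit_det M).mp (isUnit_skewTridiagMatrix hn ha)
  have hcol : M *ᵥ (M⁻¹ *ᵥ Pi.single ⟨0, hn⟩ 1) = Pi.single ⟨0, hn⟩ 1 := by
    rw [mulVec_mulVec, mul_nonsing_inv M hdet, one_mulVec]
  simpa [mulVec_single_one, one_div] using
    skewTridiagMatrix_apply_of_mulVec_eq_single hn ha hcol ⟨0, hn⟩

end

/-- The tridiagonal matrix with `a ≠ 0` in the `(0,0)` entry, `0` elsewhere on
the diagonal, `1` on the superdiagonal and `−1` on the subdiagonal is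
invertible, and the `(0,0)` entry of its inverse is `a⁻¹` when `n` is odd and
`0` when `n` is even. -/
theorem inv_tridiagonal_skew_apply_zero_zero {K : Type*} [Field K] (n : ℕ)
    (hn : 0 < n) (a : K) (ha : a ≠ 0) :
    IsUnit (Matrix.of fun i j : Fin n =>
        if (i : ℕ) = (j : ℕ) then (if (i : ℕ) = 0 then a else 0)
        else if (j : ℕ) = (i : ℕ) + 1 then 1
        else if (i : ℕ) = (j : ℕ) + 1 then -1
        else 0) ∧
    (Matrix.of fun i j : Fin n =>
        if (i : ℕ) = (j : ℕ) then (if (i : ℕ) = 0 then a else 0)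
        else if (j : ℕ) = (i : ℕ) + 1 then 1
        else if (i : ℕ) = (j : ℕ) + 1 then -1
        else 0)⁻¹ ⟨0, hn⟩ ⟨0, hn⟩ = if Odd n then a⁻¹ else 0 :=
  ⟨isUnit_skewTridiagMatrix hn ha, inv_skewTridiagMatrix_apply_zero_zero hn ha⟩
end

section
/- Let p, t ≥ 1, let J be a p×p complex matrix, let E be a t×t complex matrix with Eᵀ = E and E*E = 1, let S be a p×p complex matrix with Sᵀ*J*S = J, and let O be a t×t complex matrix with Oᵀ*E*O = E. Then O is invertible (with inverse E*Oᵀ*E), and for every p×t complex matrix X, trace((E * (S*X*O⁻¹)ᵀ * J * (S*X*O⁻¹))^2) = trace((E * Xᵀ * J * X)^2). -/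
open Matrix

/-- Proof of Proposition "clsf": `Tr((E·Xᵀ·J·X)²)` is an invariant of the
orthosymplectic action `(S,O)·X = S·X·O⁻¹` of `Sp(J) × O(E)` on `p × t`
matrices.  Here `O` is invertible with inverse `E·Oᵀ·E`. -/
theorem orthosymplectic_trace_invariant (p t : ℕ) (hp : 1 ≤ p) (ht : 1 ≤ t)
    (J : Matrix (Fin p) (Fin p) ℂ) (E : Matrix (Fin t) (Fin t) ℂ)
    (hEsymm : Eᵀ = E) (hE2 : E * E = 1)
    (S : Matrix (Fin p) (Fin p) ℂ) (hS : Sᵀ * J * S = J)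
    (O : Matrix (Fin t) (Fin t) ℂ) (hO : Oᵀ * E * O = E) :
    O * (E * Oᵀ * E) = 1 ∧ (E * Oᵀ * E) * O = 1 ∧
    ∀ X : Matrix (Fin p) (Fin t) ℂ,
      (E * (S * X * O⁻¹)ᵀ * J * (S * X * O⁻¹) *
        (E * (S * X * O⁻¹)ᵀ * J * (S * X * O⁻¹))).trace =
      (E * Xᵀ * J * X * (E * Xᵀ * J * X)).trace := by
  have hleft : (E * Oᵀ * E) * O = 1 := by
    calc (E * Oᵀ * E) * O = E * (Oᵀ * E * O) := by simp only [Matrix.mul_assoc, Matrix.mul_one, Matrix.one_mul, mul_assoc, one_mul, mul_one]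
    _ = E * E := by rw [hO]
    _ = 1 := hE2
  have hright : O * (E * Oᵀ * E) = 1 := mul_eq_one_comm.mpr hleft
  have hinv : O⁻¹ = E * Oᵀ * E := inv_eq_left_inv hleft
  refine ⟨hright, hleft, fun X => ?_⟩
  have hinvT : O⁻¹ᵀ = E * O * E := by
    rw [hinv]; simp [transpose_mul, hEsymm, mul_assoc]
  have key : E * (S * X * O⁻¹)ᵀ * J * (S * X * O⁻¹)
      = O * (E * Xᵀ * J * X) * O⁻¹ := by
    have h1 : E * (S * X * O⁻¹)ᵀ = O * E * Xᵀ * Sᵀ := by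
      simp only [transpose_mul, hinvT]
      calc E * (E * O * E * (Xᵀ * Sᵀ)) = (E * E) * O * E * Xᵀ * Sᵀ := by simp only [Matrix.mul_assoc, Matrix.mul_one, Matrix.one_mul, mul_assoc, one_mul, mul_one]
      _ = O * E * Xᵀ * Sᵀ := by rw [hE2]; simp only [Matrix.mul_assoc, Matrix.mul_one, Matrix.one_mul, mul_assoc, one_mul, mul_one]
    calc E * (S * X * O⁻¹)ᵀ * J * (S * X * O⁻¹)
        = (E * (S * X * O⁻¹)ᵀ) * J * (S * X * O⁻¹) := by simp only [Matrix.mul_assoc, Matrix.mul_one, Matrix.one_mul, mul_assoc, one_mul, mul_one]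
      _ = O * E * Xᵀ * Sᵀ * J * (S * X * O⁻¹) := by rw [h1]
      _ = O * E * Xᵀ * (Sᵀ * J * S) * X * O⁻¹ := by simp only [Matrix.mul_assoc, Matrix.mul_one, Matrix.one_mul, mul_assoc, one_mul, mul_one]
      _ = O * (E * Xᵀ * J * X) * O⁻¹ := by rw [hS]; simp only [Matrix.mul_assoc, Matrix.mul_one, Matrix.one_mul, mul_assoc, one_mul, mul_one]
  rw [key]
  have : O * (E * Xᵀ * J * X) * O⁻¹ * (O * (E * Xᵀ * J * X) * O⁻¹)
      = O * ((E * Xᵀ * J * X) * (E * Xᵀ * J * X)) * O⁻¹ := by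
    rw [hinv]
    calc O * (E * Xᵀ * J * X) * (E * Oᵀ * E) * (O * (E * Xᵀ * J * X) * (E * Oᵀ * E))
        = O * (E * Xᵀ * J * X) * ((E * Oᵀ * E) * O) * (E * Xᵀ * J * X) * (E * Oᵀ * E) := by simp only [Matrix.mul_assoc, Matrix.mul_one, Matrix.one_mul, mul_assoc, one_mul, mul_one]
      _ = _ := by rw [hleft]; simp only [Matrix.mul_assoc, Matrix.mul_one, Matrix.one_mul, mul_assoc, one_mul, mul_one]
  rw [this, trace_mul_cycle, hinv, ← mul_assoc, hleft, one_mul]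
end

section
/- Let m ≥ 1 and n = 2m. Let F be the n×n complex matrix with F i i = 1 for all i, F i (i+1) = −1 for i even, and all other entries 0. Let Σ be the n×n complex matrix with, for i < j: Σ i j = 1 if i is even and j = i+1, Σ i j = 2 if i is even, j is odd and j > i+1, and Σ i j = 0 otherwise; Σ i i = 0; and Σ j i = −(Σ i j) for i < j (so Σ is skew-symmetric). Then for every k with 1 ≤ k ≤ n, the leading principal k×k submatrix of F*Σ has nonzero determinant. -/
open Matrix

/-- The upper unitriangular matrix `F` with `1` on the diagonal, `−1` in
positions `(i, i+1)` for `i` even, and `0` elsewhere. -/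
def Fmat (m : ℕ) : Matrix (Fin (2 * m)) (Fin (2 * m)) ℂ :=
  Matrix.of fun i j =>
    if (i : ℕ) = (j : ℕ) then 1
    else if (j : ℕ) = (i : ℕ) + 1 ∧ Even (i : ℕ) then -1
    else 0

/-- The strictly-upper entries of `Σ`: for `i < j`, value `1` if `i` is even and
`j = i + 1`, value `2` if `i` is even, `j` odd and `j > i + 1`, else `0`. -/
def upEntry : ℕ → ℕ → ℂ := fun i j =>
  if Even i ∧ j = i + 1 then 1
  else if Even i ∧ Odd j ∧ i + 1 < j then 2
  else 0

/-- The skew-symmetric matrix `Σ` of the proof of Theorem "classical-unipotent",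
type `Dₙ`. -/
def Smat (m : ℕ) : Matrix (Fin (2 * m)) (Fin (2 * m)) ℂ :=
  Matrix.of fun i j =>
    if (i : ℕ) < (j : ℕ) then upEntry i j
    else if (j : ℕ) < (i : ℕ) then -upEntry j i
    else 0

def Sval (i j : ℕ) : ℂ :=
  if i < j then upEntry i j else if j < i then -upEntry j i else 0

lemma upEntry_eq (i j : ℕ) : upEntry i j =
    if i % 2 = 0 ∧ j = i + 1 then 1
    else if i % 2 = 0 ∧ j % 2 = 1 ∧ i + 1 < j then 2 else 0 := by
  simp only [upEntry, Nat.even_iff, Nat.odd_iff]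

lemma Sval_even (i j : ℕ) (h : i % 2 = 0) :
    Sval i j = if j = i + 1 then 1 else if j % 2 = 1 ∧ i + 1 < j then 2 else 0 := by
  simp only [Sval, upEntry_eq]
  split_ifs <;> first | rfl | (exfalso; omega) | norm_num

lemma Sval_odd (i j : ℕ) (h : i % 2 = 1) :
    Sval i j = if j % 2 = 0 ∧ j + 1 = i then -1
      else if j % 2 = 0 ∧ j + 1 < i then -2 else 0 := by
  simp only [Sval, upEntry_eq]
  split_ifs <;> first | rfl | (exfalso; omega) | norm_num

def Uval (i j : ℕ) : ℂ :=
  if i = j then 1 else if i < j then upEntry (i - i % 2) j else 0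

def Pval (i j : ℕ) : ℂ :=
  if i % 2 = 0 then Sval i j - Sval (i + 1) j else Sval i j

lemma Uval_even (i j : ℕ) (h : i % 2 = 0) :
    Uval i j = if i = j ∨ j = i + 1 then 1
      else if j % 2 = 1 ∧ i + 1 < j then 2 else 0 := by
  simp only [Uval, upEntry_eq]
  split_ifs <;> first | rfl | (exfalso; omega) | norm_num

lemma Uval_odd (i j : ℕ) (h : i % 2 = 1) :
    Uval i j = if i = j then 1 else if j % 2 = 1 ∧ i < j then 2 else 0 := by
  simp only [Uval, upEntry_eq]
  split_ifs <;> first | rfl | (exfalso; omega) | norm_num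

lemma K0 (j : ℕ) : Pval 0 j = Uval 0 j := by
  simp only [Pval, Sval_even 0 j rfl, Sval_odd 1 j rfl, Uval_even 0 j rfl]
  split_ifs <;> first | rfl | (exfalso; omega) | norm_num

lemma K1 (i j : ℕ) (h : i % 2 = 1) : Pval i j + Pval (i - 1) j = Uval i j := by
  have h1 : ¬ (i % 2 = 0) := by omega
  have h2 : (i - 1) % 2 = 0 := by omega
  have h3 : i - 1 + 1 = i := by omega
  simp only [Pval, if_neg h1, if_pos h2, h3]
  simp only [Sval_even (i-1) j h2, Sval_odd i j h, Uval_odd i j h, h3]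
  split_ifs <;> first | rfl | (exfalso; omega) | norm_num

set_option maxHeartbeats 1000000 in
lemma K2 (i j : ℕ) (h : i % 2 = 0) (h2 : 2 ≤ i) :
    Pval i j + 2 * Pval (i - 1) j + Pval (i - 2) j = Uval i j + Uval (i - 2) j := by
  have ho : (i - 1) % 2 = 1 := by omega
  have he : (i - 2) % 2 = 0 := by omega
  have e1 : i - 2 + 1 = i - 1 := by omega
  simp only [Pval, if_pos h, if_neg (show ¬((i-1) % 2 = 0) by omega), if_pos he, e1]
  simp only [Sval_even i j h, Sval_odd (i+1) j (by omega), Sval_odd (i-1) j ho,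
    Sval_even (i-2) j he, Uval_even i j h, Uval_even (i-2) j he]
  split_ifs <;> first | rfl | (exfalso; omega) | norm_num

def Aval (i j : ℕ) : ℂ :=
  if i = j then 1
  else if j + 1 = i ∧ i % 2 = 1 then 1
  else if j + 1 = i ∧ i % 2 = 0 then 2
  else if j + 2 = i ∧ i % 2 = 0 then 1
  else 0

def Bval (i j : ℕ) : ℂ :=
  if i = j then 1 else if j + 2 = i ∧ i % 2 = 0 then 1 else 0

def Amat (m : ℕ) : Matrix (Fin (2 * m)) (Fin (2 * m)) ℂ :=
  Matrix.of fun i j => Aval i j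

def Bmat (m : ℕ) : Matrix (Fin (2 * m)) (Fin (2 * m)) ℂ :=
  Matrix.of fun i j => Bval i j

def Umat (m : ℕ) : Matrix (Fin (2 * m)) (Fin (2 * m)) ℂ :=
  Matrix.of fun i j => Uval i j

lemma Aval_diag (i : ℕ) : Aval i i = 1 := by simp [Aval]

lemma Bval_diag (i : ℕ) : Bval i i = 1 := by simp [Bval]

lemma Uval_diag (i : ℕ) : Uval i i = 1 := by simp [Uval]

lemma Aval_sub1_odd (i : ℕ) (h : i % 2 = 1) : Aval i (i - 1) = 1 := by
  simp only [Aval]; split_ifs <;> first | rfl | (exfalso; omega)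

lemma Aval_sub1_even (i : ℕ) (h : i % 2 = 0) (h2 : 2 ≤ i) : Aval i (i - 1) = 2 := by
  simp only [Aval]; split_ifs <;> first | rfl | (exfalso; omega)

lemma Aval_sub2 (i : ℕ) (h : i % 2 = 0) (h2 : 2 ≤ i) : Aval i (i - 2) = 1 := by
  simp only [Aval]; split_ifs <;> first | rfl | (exfalso; omega)

lemma Bval_sub2 (i : ℕ) (h : i % 2 = 0) (h2 : 2 ≤ i) : Bval i (i - 2) = 1 := by
  simp only [Bval]; split_ifs <;> first | rfl | (exfalso; omega)

lemma Aval_zero (i t : ℕ) (h1 : t ≠ i) (h2 : t + 1 ≠ i)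
    (h3 : ¬(t + 2 = i ∧ i % 2 = 0)) : Aval i t = 0 := by
  simp only [Aval]; split_ifs <;> first | rfl | (exfalso; omega)

lemma Bval_zero (i t : ℕ) (h1 : t ≠ i) (h3 : ¬(t + 2 = i ∧ i % 2 = 0)) :
    Bval i t = 0 := by
  simp only [Bval]; split_ifs <;> first | rfl | (exfalso; omega)

lemma Aval_upper (i j : ℕ) (h : i < j) : Aval i j = 0 :=
  Aval_zero i j (by omega) (by omega) (by omega)

lemma Bval_upper (i j : ℕ) (h : i < j) : Bval i j = 0 :=
  Bval_zero i j (by omega) (by omega)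

lemma Uval_lower (i j : ℕ) (h : j < i) : Uval i j = 0 := by
  simp only [Uval]; rw [if_neg (by omega), if_neg (by omega)]

lemma sum_eq_of_support {n : ℕ} (f : Fin n → ℂ) (s : Finset (Fin n))
    (h : ∀ t ∉ s, f t = 0) : ∑ t, f t = ∑ t ∈ s, f t :=
  (Finset.sum_subset s.subset_univ (fun t _ ht => h t ht)).symm

lemma FS_apply (m : ℕ) (i j : Fin (2 * m)) :
    (Fmat m * Smat m) i j = Pval (i : ℕ) (j : ℕ) := by
  rw [Matrix.mul_apply]
  by_cases hi : (i : ℕ) % 2 = 0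
  · have h1 : (i : ℕ) + 1 < 2 * m := by have := i.isLt; omega
    have hs : (∑ t : Fin (2 * m), Fmat m i t * Smat m t j)
        = ∑ t ∈ ({i, ⟨(i : ℕ) + 1, h1⟩} : Finset (Fin (2 * m))),
            Fmat m i t * Smat m t j := by
      apply sum_eq_of_support
      intro t ht
      simp only [Finset.mem_insert, Finset.mem_singleton] at ht
      push_neg at ht
      have n1 : (t : ℕ) ≠ (i : ℕ) := fun hh => ht.1 (Fin.ext hh)
      have n2 : (t : ℕ) ≠ (i : ℕ) + 1 := fun hh => ht.2 (Fin.ext hh)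
      have hz : Fmat m i t = 0 := by
        show (if (i : ℕ) = (t : ℕ) then (1 : ℂ)
          else if (t : ℕ) = (i : ℕ) + 1 ∧ Even (i : ℕ) then -1 else 0) = 0
        rw [if_neg (by omega), if_neg (by rintro ⟨a, _⟩; exact n2 a)]
      rw [hz, zero_mul]
    rw [hs, Finset.sum_insert (Finset.notMem_singleton.mpr
        (Fin.ne_of_val_ne (show (i : ℕ) ≠ (i : ℕ) + 1 by omega))),
      Finset.sum_singleton]
    have e1 : Fmat m i i = 1 := by
      show (if (i : ℕ) = (i : ℕ) then (1 : ℂ) else _) = 1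
      rw [if_pos rfl]
    have e2 : Fmat m i ⟨(i : ℕ) + 1, h1⟩ = -1 := by
      show (if (i : ℕ) = (i : ℕ) + 1 then (1 : ℂ)
        else if (i : ℕ) + 1 = (i : ℕ) + 1 ∧ Even (i : ℕ) then -1 else 0) = -1
      rw [if_neg (by omega), if_pos ⟨rfl, Nat.even_iff.mpr hi⟩]
    have s1 : Smat m i j = Sval (i : ℕ) (j : ℕ) := rfl
    have s2 : Smat m ⟨(i : ℕ) + 1, h1⟩ j = Sval ((i : ℕ) + 1) (j : ℕ) := rfl
    rw [e1, e2, s1, s2, one_mul, Pval, if_pos hi]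
    ring
  · have hs : (∑ t : Fin (2 * m), Fmat m i t * Smat m t j)
        = ∑ t ∈ ({i} : Finset (Fin (2 * m))), Fmat m i t * Smat m t j := by
      apply sum_eq_of_support
      intro t ht
      have n1 : (t : ℕ) ≠ (i : ℕ) :=
        fun hh => (Finset.notMem_singleton.mp ht) (Fin.ext hh)
      have hz : Fmat m i t = 0 := by
        show (if (i : ℕ) = (t : ℕ) then (1 : ℂ)
          else if (t : ℕ) = (i : ℕ) + 1 ∧ Even (i : ℕ) then -1 else 0) = 0
        rw [if_neg (by omega), if_neg (by
          rintro ⟨_, hev⟩; rw [Nat.even_iff] at hev; omega)]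
      rw [hz, zero_mul]
    rw [hs, Finset.sum_singleton]
    have e1 : Fmat m i i = 1 := by
      show (if (i : ℕ) = (i : ℕ) then (1 : ℂ) else _) = 1
      rw [if_pos rfl]
    have s1 : Smat m i j = Sval (i : ℕ) (j : ℕ) := rfl
    rw [e1, s1, one_mul, Pval, if_neg hi]

lemma ABmain (m : ℕ) : Amat m * (Fmat m * Smat m) = Bmat m * Umat m := by
  ext i j
  rw [Matrix.mul_apply, Matrix.mul_apply]
  have hFS : ∀ t : Fin (2 * m), (Fmat m * Smat m) t j = Pval (t : ℕ) (j : ℕ) :=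
    fun t => FS_apply m t j
  simp only [hFS]
  have hAapp : ∀ t : Fin (2 * m), Amat m i t = Aval (i : ℕ) (t : ℕ) := fun _ => rfl
  have hBapp : ∀ t : Fin (2 * m), Bmat m i t = Bval (i : ℕ) (t : ℕ) := fun _ => rfl
  have hUapp : ∀ t : Fin (2 * m), Umat m t j = Uval (t : ℕ) (j : ℕ) := fun _ => rfl
  simp only [hAapp, hBapp, hUapp]
  by_cases hp : (i : ℕ) % 2 = 1
  · -- odd row
    have hlt : (i : ℕ) - 1 < 2 * m := by have := i.isLt; omega
    have hL : (∑ t : Fin (2 * m), Aval (i : ℕ) (t : ℕ) * Pval (t : ℕ) (j : ℕ))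
        = ∑ t ∈ ({⟨(i : ℕ) - 1, hlt⟩, i} : Finset (Fin (2 * m))),
            Aval (i : ℕ) (t : ℕ) * Pval (t : ℕ) (j : ℕ) := by
      apply sum_eq_of_support
      intro t ht
      simp only [Finset.mem_insert, Finset.mem_singleton] at ht
      push_neg at ht
      have n1 : (t : ℕ) ≠ (i : ℕ) - 1 := fun hh => ht.1 (Fin.ext hh)
      have n2 : (t : ℕ) ≠ (i : ℕ) := fun hh => ht.2 (Fin.ext hh)
      rw [Aval_zero _ _ (by omega) (by omega) (by omega), zero_mul]
    have hR : (∑ t : Fin (2 * m), Bval (i : ℕ) (t : ℕ) * Uval (t : ℕ) (j : ℕ))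
        = ∑ t ∈ ({i} : Finset (Fin (2 * m))),
            Bval (i : ℕ) (t : ℕ) * Uval (t : ℕ) (j : ℕ) := by
      apply sum_eq_of_support
      intro t ht
      have n1 : (t : ℕ) ≠ (i : ℕ) :=
        fun hh => (Finset.notMem_singleton.mp ht) (Fin.ext hh)
      rw [Bval_zero _ _ (by omega) (by omega), zero_mul]
    rw [hL, hR, Finset.sum_insert (Finset.notMem_singleton.mpr
        (Fin.ne_of_val_ne (show (i : ℕ) - 1 ≠ (i : ℕ) by omega))),
      Finset.sum_singleton, Finset.sum_singleton]
    show Aval (i : ℕ) ((i : ℕ) - 1) * Pval ((i : ℕ) - 1) (j : ℕ)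
        + Aval (i : ℕ) (i : ℕ) * Pval (i : ℕ) (j : ℕ)
        = Bval (i : ℕ) (i : ℕ) * Uval (i : ℕ) (j : ℕ)
    rw [Aval_diag, Aval_sub1_odd _ hp, Bval_diag, one_mul, one_mul, one_mul]
    linear_combination K1 (i : ℕ) (j : ℕ) hp
  · have hp0 : (i : ℕ) % 2 = 0 := by omega
    by_cases h2 : 2 ≤ (i : ℕ)
    · have hlt2 : (i : ℕ) - 2 < 2 * m := by have := i.isLt; omega
      have hlt1 : (i : ℕ) - 1 < 2 * m := by have := i.isLt; omega
      have hL : (∑ t : Fin (2 * m), Aval (i : ℕ) (t : ℕ) * Pval (t : ℕ) (j : ℕ))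
          = ∑ t ∈ ({⟨(i : ℕ) - 2, hlt2⟩, ⟨(i : ℕ) - 1, hlt1⟩, i} :
              Finset (Fin (2 * m))),
              Aval (i : ℕ) (t : ℕ) * Pval (t : ℕ) (j : ℕ) := by
        apply sum_eq_of_support
        intro t ht
        simp only [Finset.mem_insert, Finset.mem_singleton] at ht
        push_neg at ht
        have n1 : (t : ℕ) ≠ (i : ℕ) - 2 := fun hh => ht.1 (Fin.ext hh)
        have n2 : (t : ℕ) ≠ (i : ℕ) - 1 := fun hh => ht.2.1 (Fin.ext hh)
        have n3 : (t : ℕ) ≠ (i : ℕ) := fun hh => ht.2.2 (Fin.ext hh)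
        rw [Aval_zero _ _ (by omega) (by omega) (by omega), zero_mul]
      have hR : (∑ t : Fin (2 * m), Bval (i : ℕ) (t : ℕ) * Uval (t : ℕ) (j : ℕ))
          = ∑ t ∈ ({⟨(i : ℕ) - 2, hlt2⟩, i} : Finset (Fin (2 * m))),
              Bval (i : ℕ) (t : ℕ) * Uval (t : ℕ) (j : ℕ) := by
        apply sum_eq_of_support
        intro t ht
        simp only [Finset.mem_insert, Finset.mem_singleton] at ht
        push_neg at ht
        have n1 : (t : ℕ) ≠ (i : ℕ) - 2 := fun hh => ht.1 (Fin.ext hh)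
        have n2 : (t : ℕ) ≠ (i : ℕ) := fun hh => ht.2 (Fin.ext hh)
        rw [Bval_zero _ _ (by omega) (by omega), zero_mul]
      rw [hL, hR]
      rw [Finset.sum_insert (by
          simp only [Finset.mem_insert, Finset.mem_singleton]
          push_neg
          exact ⟨Fin.ne_of_val_ne (show (i : ℕ) - 2 ≠ (i : ℕ) - 1 by omega),
            Fin.ne_of_val_ne (show (i : ℕ) - 2 ≠ (i : ℕ) by omega)⟩),
        Finset.sum_insert (Finset.notMem_singleton.mpr
          (Fin.ne_of_val_ne (show (i : ℕ) - 1 ≠ (i : ℕ) by omega))),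
        Finset.sum_singleton,
        Finset.sum_insert (Finset.notMem_singleton.mpr
          (Fin.ne_of_val_ne (show (i : ℕ) - 2 ≠ (i : ℕ) by omega))),
        Finset.sum_singleton]
      show Aval (i : ℕ) ((i : ℕ) - 2) * Pval ((i : ℕ) - 2) (j : ℕ)
          + (Aval (i : ℕ) ((i : ℕ) - 1) * Pval ((i : ℕ) - 1) (j : ℕ)
            + Aval (i : ℕ) (i : ℕ) * Pval (i : ℕ) (j : ℕ))
          = Bval (i : ℕ) ((i : ℕ) - 2) * Uval ((i : ℕ) - 2) (j : ℕ)
            + Bval (i : ℕ) (i : ℕ) * Uval (i : ℕ) (j : ℕ)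
      rw [Aval_diag, Aval_sub1_even _ hp0 h2, Aval_sub2 _ hp0 h2, Bval_diag,
        Bval_sub2 _ hp0 h2]
      linear_combination K2 (i : ℕ) (j : ℕ) hp0 h2
    · have hz : (i : ℕ) = 0 := by omega
      have hL : (∑ t : Fin (2 * m), Aval (i : ℕ) (t : ℕ) * Pval (t : ℕ) (j : ℕ))
          = ∑ t ∈ ({i} : Finset (Fin (2 * m))),
              Aval (i : ℕ) (t : ℕ) * Pval (t : ℕ) (j : ℕ) := by
        apply sum_eq_of_support
        intro t ht
        have n1 : (t : ℕ) ≠ (i : ℕ) :=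
          fun hh => (Finset.notMem_singleton.mp ht) (Fin.ext hh)
        rw [Aval_zero _ _ (by omega) (by omega) (by omega), zero_mul]
      have hR : (∑ t : Fin (2 * m), Bval (i : ℕ) (t : ℕ) * Uval (t : ℕ) (j : ℕ))
          = ∑ t ∈ ({i} : Finset (Fin (2 * m))),
              Bval (i : ℕ) (t : ℕ) * Uval (t : ℕ) (j : ℕ) := by
        apply sum_eq_of_support
        intro t ht
        have n1 : (t : ℕ) ≠ (i : ℕ) :=
          fun hh => (Finset.notMem_singleton.mp ht) (Fin.ext hh)
        rw [Bval_zero _ _ (by omega) (by omega), zero_mul]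
      rw [hL, hR, Finset.sum_singleton, Finset.sum_singleton, Aval_diag,
        Bval_diag, one_mul, one_mul, hz]
      exact K0 (j : ℕ)

lemma mul_submatrix_lower {n k : ℕ} (hk : k ≤ n) (L M : Matrix (Fin n) (Fin n) ℂ)
    (hL : ∀ i j : Fin n, (i : ℕ) < (j : ℕ) → L i j = 0) :
    (L * M).submatrix (Fin.castLE hk) (Fin.castLE hk)
      = L.submatrix (Fin.castLE hk) (Fin.castLE hk)
        * M.submatrix (Fin.castLE hk) (Fin.castLE hk) := by
  ext i j
  simp only [Matrix.submatrix_apply, Matrix.mul_apply]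
  have hs : (∑ t : Fin n, L (Fin.castLE hk i) t * M t (Fin.castLE hk j))
      = ∑ t ∈ Finset.univ.map (Fin.castLEEmb hk),
          L (Fin.castLE hk i) t * M t (Fin.castLE hk j) := by
    apply sum_eq_of_support
    intro t ht
    have hkt : ¬ (t : ℕ) < k := fun hh =>
      ht (Finset.mem_map.mpr ⟨⟨(t : ℕ), hh⟩, Finset.mem_univ _, Fin.ext rfl⟩)
    rw [hL _ _ (show (i : ℕ) < (t : ℕ) by have := i.isLt; omega), zero_mul]
  rw [hs, Finset.sum_map]
  rfl

/-- Every leading principal minor of `F·Σ` is nonzero, i.e. `F·Σ` lies in the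
big cell of `GL_{2m}(ℂ)` (proof of Theorem "classical-unipotent", type `Dₙ`). -/
theorem FS_leading_minors_ne_zero (m : ℕ) (hm : 1 ≤ m) :
    ∀ k : ℕ, 1 ≤ k → ∀ hk : k ≤ 2 * m,
      ((Fmat m * Smat m).submatrix (Fin.castLE hk) (Fin.castLE hk)).det ≠ 0 := by
  intro k hk1 hk
  have key := ABmain m
  have hA : ∀ i j : Fin (2 * m), (i : ℕ) < (j : ℕ) → Amat m i j = 0 :=
    fun i j h => Aval_upper _ _ h
  have hB : ∀ i j : Fin (2 * m), (i : ℕ) < (j : ℕ) → Bmat m i j = 0 :=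
    fun i j h => Bval_upper _ _ h
  have hU : ∀ i j : Fin (2 * m), (j : ℕ) < (i : ℕ) → Umat m i j = 0 :=
    fun i j h => Uval_lower _ _ h
  have h1 := mul_submatrix_lower hk (Amat m) (Fmat m * Smat m) hA
  have h2 := mul_submatrix_lower hk (Bmat m) (Umat m) hB
  have h3 : (Amat m).submatrix (Fin.castLE hk) (Fin.castLE hk)
      * (Fmat m * Smat m).submatrix (Fin.castLE hk) (Fin.castLE hk)
      = (Bmat m).submatrix (Fin.castLE hk) (Fin.castLE hk)
        * (Umat m).submatrix (Fin.castLE hk) (Fin.castLE hk) := by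
    rw [← h1, ← h2, key]
  have tA : ((Amat m).submatrix (Fin.castLE hk) (Fin.castLE hk)).BlockTriangular
      OrderDual.toDual := by
    intro i j hij
    exact hA _ _ (Fin.lt_def.mp (OrderDual.toDual_lt_toDual.mp hij))
  have tB : ((Bmat m).submatrix (Fin.castLE hk) (Fin.castLE hk)).BlockTriangular
      OrderDual.toDual := by
    intro i j hij
    exact hB _ _ (Fin.lt_def.mp (OrderDual.toDual_lt_toDual.mp hij))
  have tU : ((Umat m).submatrix (Fin.castLE hk) (Fin.castLE hk)).BlockTriangular id := by
    intro i j hij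
    exact hU _ _ (Fin.lt_def.mp hij)
  have dA : ((Amat m).submatrix (Fin.castLE hk) (Fin.castLE hk)).det = 1 := by
    rw [Matrix.det_of_lowerTriangular _ tA]
    exact Finset.prod_eq_one (fun x _ => show Aval _ _ = 1 from Aval_diag _)
  have dB : ((Bmat m).submatrix (Fin.castLE hk) (Fin.castLE hk)).det = 1 := by
    rw [Matrix.det_of_lowerTriangular _ tB]
    exact Finset.prod_eq_one (fun x _ => show Bval _ _ = 1 from Bval_diag _)
  have dU : ((Umat m).submatrix (Fin.castLE hk) (Fin.castLE hk)).det = 1 := by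
    rw [Matrix.det_of_upperTriangular tU]
    exact Finset.prod_eq_one (fun x _ => show Uval _ _ = 1 from Uval_diag _)
  have hd := congrArg Matrix.det h3
  rw [Matrix.det_mul, Matrix.det_mul, dA, dB, dU, one_mul, mul_one] at hd
  rw [hd]
  exact one_ne_zero
end
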